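/- arXiv:2007.10790 — 10 statements merged into one kernel-verified Lean document; each statement's English description precedes it below -/
import Mathlib

section
/- Removal lemma for small sets (quantitative form): Let U be a finite set, Δ ≥ 1 an integer, C > 0 a real number, and let (F_i)_{i∈ι} be a family of subsets of U indexed by a finite set ι with |F_i| ≤ Δ for every i ∈ ι. Then there exist a subset ι' ⊆ ι and a subset U' ⊆ U such that (i) |ι'| ≥ |ι| / (Δ·e^{1+C·Δ²}) + C·|U'| (as real numbers), and (ii) for all distinct i, j ∈ ι' we have F_i ∩ F_j ⊆ U'. -/
/-!
Give index `i` the weight `exp (-(C Δ |F i|))` and track the potential `(∑ weights) / (Δ e)`,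
which starts at least `|ι| / (Δ e^{1 + C Δ²})`. Proceed greedily. If some point `u` has weighted
degree at least `C Δ e / (e^{C Δ} - 1)`, put `u` into `U'` and delete it from every set: the
weights of the sets through `u` grow by the factor `e^{C Δ}`, so the potential rises by at least
`C`, which pays for the new point. Otherwise every weighted degree is below `e`, so the sets
meeting a given `F i₀` weigh at most `|F i₀| e ≤ Δ e` together; take `i₀` into `ι'` and discard
the sets meeting it, which lowers the potential by at most `1`.
-/

open Finset Real

namespace SmallSetRemoval

variable {U ι : Type*}

noncomputable def weight (x : ℝ) (s : Finset U) : ℝ := exp (-(x * #s))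

lemma weight_nonneg (x : ℝ) (s : Finset U) : 0 ≤ weight x s := (exp_pos _).le

lemma exp_neg_mul_le_weight {x : ℝ} (hx : 0 ≤ x) {s : Finset U} {Δ : ℕ} (hs : #s ≤ Δ) :
    exp (-(x * Δ)) ≤ weight x s := by
  unfold weight
  gcongr

@[simp] lemma weight_empty (x : ℝ) : weight x (∅ : Finset U) = 1 := by simp [weight]

variable [DecidableEq U]

noncomputable def degree (x : ℝ) (F : ι → Finset U) (A : Finset ι) (u : U) : ℝ :=
  ∑ i ∈ A with u ∈ F i, weight x (F i)

lemma sum_weight_not_disjoint_le (x : ℝ) (F : ι → Finset U) (A : Finset ι) (s : Finset U) :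
    ∑ j ∈ A with ¬Disjoint s (F j), weight x (F j) ≤ ∑ u ∈ s, degree x F A u := by
  calc ∑ j ∈ A with ¬Disjoint s (F j), weight x (F j)
      ≤ ∑ j ∈ A with ¬Disjoint s (F j), #(s ∩ F j) * weight x (F j) := by
        gcongr with j hj
        have : 1 ≤ #(s ∩ F j) :=
          card_pos.2 (not_disjoint_iff_nonempty_inter.1 (mem_filter.1 hj).2)
        exact le_mul_of_one_le_left (weight_nonneg _ _) (by exact_mod_cast this)
    _ ≤ ∑ j ∈ A, #(s ∩ F j) * weight x (F j) :=
        sum_le_sum_of_subset_of_nonneg (filter_subset _ _) fun _ _ _ ↦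
          mul_nonneg (Nat.cast_nonneg _) (weight_nonneg _ _)
    _ = ∑ u ∈ s, degree x F A u := by
        simp_rw [degree, sum_filter, ← filter_mem_eq_inter, card_eq_sum_ones, Nat.cast_sum,
          sum_mul, sum_filter, Nat.cast_one, one_mul]
        exact sum_comm

lemma weight_erase_of_mem {x : ℝ} {s : Finset U} {u : U} (hu : u ∈ s) :
    weight x (s.erase u) = exp x * weight x s := by
  rw [weight, weight, card_erase_of_mem hu, Nat.cast_sub (card_pos.2 ⟨u, hu⟩), ← exp_add]
  ring_nf

lemma sum_weight_erase (x : ℝ) (F : ι → Finset U) (A : Finset ι) (u : U) :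
    ∑ i ∈ A, weight x ((F i).erase u) =
      ∑ i ∈ A, weight x (F i) + (exp x - 1) * degree x F A u := by
  have hmem : ∑ i ∈ A with u ∈ F i, weight x ((F i).erase u) =
      exp x * degree x F A u := by
    rw [degree, mul_sum]
    exact sum_congr rfl fun i hi ↦ weight_erase_of_mem (mem_filter.1 hi).2
  have hnotMem : ∑ i ∈ A with u ∉ F i, weight x ((F i).erase u) =
      ∑ i ∈ A with u ∉ F i, weight x (F i) :=
    sum_congr rfl fun i hi ↦ by rw [erase_eq_of_notMem (mem_filter.1 hi).2]
  rw [← sum_filter_add_sum_filter_not A (u ∈ F ·), hmem, hnotMem,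
    ← sum_filter_add_sum_filter_not A (u ∈ F ·) (fun i ↦ weight x (F i)), degree]
  ring

lemma sum_weight_le_of_forall_not_disjoint {x : ℝ} {F : ι → Finset U} {A S : Finset ι} {i₀ : ι}
    {Δ : ℕ} (hΔ : 0 < Δ) (hi₀ : #(F i₀) ≤ Δ) (hdeg : ∀ u, degree x F A u ≤ exp 1) (hSA : S ⊆ A)
    (hS : ∀ j ∈ S, j = i₀ ∨ ¬Disjoint (F i₀) (F j)) :
    ∑ j ∈ S, weight x (F j) ≤ Δ * exp 1 := by
  have hΔe : 1 ≤ (Δ : ℝ) * exp 1 :=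
    one_le_mul_of_one_le_of_one_le (by exact_mod_cast hΔ) (one_le_exp zero_le_one)
  obtain hempty | hne := (F i₀).eq_empty_or_nonempty
  · have hS₀ : S ⊆ {i₀} := fun j hj ↦ by simpa [hempty] using hS j hj
    calc ∑ j ∈ S, weight x (F j) ≤ ∑ j ∈ {i₀}, weight x (F j) :=
          sum_le_sum_of_subset_of_nonneg hS₀ fun _ _ _ ↦ weight_nonneg _ _
      _ ≤ Δ * exp 1 := by simpa [hempty] using hΔe
  · have hi₀_meets : ¬Disjoint (F i₀) (F i₀) := by
      rwa [not_disjoint_iff_nonempty_inter, inter_self]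
    have hS₁ : S ⊆ {j ∈ A | ¬Disjoint (F i₀) (F j)} := fun j hj ↦
      mem_filter.2 ⟨hSA hj, (hS j hj).elim (fun h ↦ h ▸ hi₀_meets) id⟩
    calc ∑ j ∈ S, weight x (F j)
        ≤ ∑ j ∈ A with ¬Disjoint (F i₀) (F j), weight x (F j) :=
          sum_le_sum_of_subset_of_nonneg hS₁ fun _ _ _ ↦ weight_nonneg _ _
      _ ≤ ∑ u ∈ F i₀, degree x F A u := sum_weight_not_disjoint_le x F A (F i₀)
      _ ≤ #(F i₀) * exp 1 := by simpa using sum_le_sum fun u _ ↦ hdeg u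
      _ ≤ Δ * exp 1 := by gcongr

def HasLargeSubfamily (C : ℝ) (Δ : ℕ) (F : ι → Finset U) (A : Finset ι) : Prop :=
  ∃ I ⊆ A, ∃ V : Finset U, (∑ i ∈ A, weight (C * Δ) (F i)) / (Δ * exp 1) + C * #V ≤ #I ∧
    (I : Set ι).Pairwise fun i j ↦ F i ∩ F j ⊆ V

variable {C : ℝ} {Δ : ℕ} {F : ι → Finset U} {A : Finset ι}

lemma hasLargeSubfamily_empty : HasLargeSubfamily C Δ F ∅ :=
  ⟨∅, subset_rfl, ∅, by simp, by simp⟩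

lemma HasLargeSubfamily.of_erase (hC : 0 ≤ C) (hΔ : 0 < Δ) {u : U}
    (hu : C * Δ * exp 1 ≤ (exp (C * Δ) - 1) * degree (C * Δ) F A u)
    (h : HasLargeSubfamily C Δ (fun i ↦ (F i).erase u) A) : HasLargeSubfamily C Δ F A := by
  obtain ⟨I, hIA, V, hbound, hpair⟩ := h
  refine ⟨I, hIA, insert u V, ?_, hpair.imp fun i j hij ↦ ?_⟩
  · have hΔe : 0 < (Δ : ℝ) * exp 1 := by positivity
    have hgain : (∑ i ∈ A, weight (C * Δ) (F i)) / (Δ * exp 1) + C ≤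
        (∑ i ∈ A, weight (C * Δ) ((F i).erase u)) / (Δ * exp 1) := by
      rw [sum_weight_erase, add_div]
      gcongr
      rw [le_div_iff₀ hΔe, ← mul_assoc]
      exact hu
    have hV : C * #(insert u V) ≤ C * (#V + 1) := by
      gcongr
      exact_mod_cast card_insert_le u V
    linarith
  · rw [subset_insert_iff]
    intro v hv
    apply hij
    simp only [mem_erase, mem_inter] at hv ⊢
    tauto

lemma HasLargeSubfamily.of_disjoint [DecidableEq ι] (hΔ : 0 < Δ) {R : Finset ι} {i₀ : ι}
    (hRA : R ⊆ A) (hR : ∀ j ∈ R, j ≠ i₀ ∧ Disjoint (F i₀) (F j)) (hi₀ : i₀ ∈ A)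
    (hAR : ∑ j ∈ A \ R, weight (C * Δ) (F j) ≤ Δ * exp 1)
    (h : HasLargeSubfamily C Δ F R) : HasLargeSubfamily C Δ F A := by
  obtain ⟨I, hIR, V, hbound, hpair⟩ := h
  have hi₀I : i₀ ∉ I := fun h ↦ (hR i₀ (hIR h)).1 rfl
  refine ⟨insert i₀ I, insert_subset hi₀ (hIR.trans hRA), V, ?_, ?_⟩
  · have hΔe : 0 < (Δ : ℝ) * exp 1 := by positivity
    rw [← sum_sdiff hRA, add_div, card_insert_of_notMem hi₀I, Nat.cast_succ]
    linarith [(div_le_one hΔe).2 hAR]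
  · rw [coe_insert]
    refine hpair.insert fun j hj _ ↦ ?_
    have hempty := disjoint_iff_inter_eq_empty.1 (hR j (hIR hj)).2
    rw [inter_comm (F j), hempty]
    exact ⟨empty_subset V, empty_subset V⟩

theorem hasLargeSubfamily [DecidableEq ι] (hC : 0 < C) (hΔ : 0 < Δ) (F : ι → Finset U)
    (A : Finset ι) (hF : ∀ i ∈ A, #(F i) ≤ Δ) : HasLargeSubfamily C Δ F A := by
  induction hn : ∑ i ∈ A, (#(F i) + 1) using Nat.strong_induction_on generalizing F A with
  | _ n ih =>
  subst hn
  obtain rfl | ⟨i₀, hi₀⟩ := A.eq_empty_or_nonempty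
  · exact hasLargeSubfamily_empty
  by_cases heavy : ∃ u, C * Δ * exp 1 ≤ (exp (C * Δ) - 1) * degree (C * Δ) F A u
  · obtain ⟨u, hu⟩ := heavy
    have hdeg_ne : degree (C * Δ) F A u ≠ 0 := by
      rintro h0
      rw [h0, mul_zero] at hu
      have : 0 < C * Δ * exp 1 := by positivity
      linarith
    obtain ⟨i, hi, -⟩ := exists_ne_zero_of_sum_ne_zero hdeg_ne
    obtain ⟨hiA, hui⟩ := mem_filter.1 hi
    refine .of_erase hC.le hΔ hu (ih _ ?_ _ A (fun j hj ↦ card_erase_le.trans (hF j hj)) rfl)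
    refine sum_lt_sum (fun j _ ↦ Nat.succ_le_succ card_erase_le) ⟨i, hiA, ?_⟩
    exact Nat.succ_lt_succ (card_erase_lt_of_mem hui)
  · push Not at heavy
    have hx₀ : 0 < C * Δ := mul_pos hC (Nat.cast_pos.2 hΔ)
    have hx : C * Δ < exp (C * Δ) - 1 := by linarith [add_one_lt_exp hx₀.ne']
    have hdeg : ∀ u, degree (C * Δ) F A u ≤ exp 1 := fun u ↦
      le_of_mul_le_mul_left ((heavy u).le.trans (by gcongr)) (hx₀.trans hx)
    set R := {j ∈ A | j ≠ i₀ ∧ Disjoint (F i₀) (F j)}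
    have hAR : ∑ j ∈ A \ R, weight (C * Δ) (F j) ≤ Δ * exp 1 :=
      sum_weight_le_of_forall_not_disjoint hΔ (hF i₀ hi₀) hdeg (sdiff_subset : A \ R ⊆ A)
        fun j hj ↦ by
          simp only [R, mem_sdiff, mem_filter] at hj
          tauto
    refine .of_disjoint hΔ (filter_subset _ _) (fun j hj ↦ (mem_filter.1 hj).2) hi₀ hAR
      (ih _ ?_ _ R (fun j hj ↦ hF j (filter_subset _ _ hj)) rfl)
    exact sum_lt_sum_of_subset (filter_subset _ _) hi₀ (by simp [R]) (by omega)
      fun _ _ _ ↦ by omega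

end SmallSetRemoval

open SmallSetRemoval

theorem removal_lemma_for_small_sets_general
    {U : Type*} [DecidableEq U] {ι : Type*} [Fintype ι]
    (Δ : ℕ) (hΔ : 1 ≤ Δ) (C : ℝ) (hC : 0 < C)
    (F : ι → Finset U) (hF : ∀ i, (F i).card ≤ Δ) :
    ∃ (ι' : Finset ι) (U' : Finset U),
      (Fintype.card ι : ℝ) / (Δ * Real.exp (1 + C * Δ ^ 2)) + C * U'.card ≤ ι'.card ∧
      ∀ i ∈ ι', ∀ j ∈ ι', i ≠ j → F i ∩ F j ⊆ U' := by
  classical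
  obtain ⟨I, -, V, hbound, hpair⟩ := hasLargeSubfamily hC hΔ F univ fun i _ ↦ hF i
  refine ⟨I, V, le_trans ?_ hbound, fun i hi j hj hij ↦ hpair hi hj hij⟩
  have hsum : Fintype.card ι * exp (-(C * Δ * Δ)) ≤ ∑ i, weight (C * Δ) (F i) := by
    simpa using card_nsmul_le_sum univ _ _ fun i _ ↦ exp_neg_mul_le_weight (by positivity) (hF i)
  have hsplit : Fintype.card ι / (Δ * exp (1 + C * Δ ^ 2)) =
      Fintype.card ι * exp (-(C * Δ * Δ)) / (Δ * exp 1) := by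
    rw [exp_add, exp_neg]
    field_simp
  rw [hsplit]
  gcongr

/-- **Removal lemma for small sets (quantitative form).**
`U` is a finite type (the universe), `F : ι → Finset U` a family of subsets of `U`
indexed by a finite type `ι`, with `|F i| ≤ Δ` for all `i`.  Then there exist
`ι' ⊆ ι` and `U' ⊆ U` such that `|ι'| ≥ |ι| / (Δ · e^{1 + C·Δ²}) + C·|U'|`
and the sets `F i`, `i ∈ ι'`, are pairwise disjoint outside of `U'`. -/
theorem removal_lemma_for_small_sets
    {U : Type*} [Fintype U] [DecidableEq U] {ι : Type*} [Fintype ι]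
    (Δ : ℕ) (hΔ : 1 ≤ Δ) (C : ℝ) (hC : 0 < C)
    (F : ι → Finset U) (hF : ∀ i, (F i).card ≤ Δ) :
    ∃ (ι' : Finset ι) (U' : Finset U),
      (Fintype.card ι : ℝ) / (Δ * Real.exp (1 + C * Δ ^ 2)) + C * U'.card ≤ ι'.card ∧
      ∀ i ∈ ι', ∀ j ∈ ι', i ≠ j → F i ∩ F j ⊆ U' :=
  removal_lemma_for_small_sets_general Δ hΔ C hC F hF
end

section
/- Let U be a finite set, Δ ≥ 1 an integer, C ≥ 0 a real number, and let (F_i)_{i∈ι} be a family of subsets of U indexed by a finite set ι with |F_i| ≤ Δ for every i ∈ ι. For an integer d ≥ 1 define the real number V(d) = |ι|/(Δ·d) − C·∑_{i=d+1}^{|ι|} U(i). Then for every integer D ≥ 1 one has ∑_{d=1}^{D} V(d) ≥ (|ι|/Δ)·H_D − C·Δ·|ι|, where H_D = ∑_{k=1}^{D} 1/k is the D-th harmonic number. -/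
/-!
Every element of degree `> d` contributes to the `d`-th correction term, so summing the
corrections over `d` counts each element at most `deg u` times; by double counting the total is
at most `∑ u, deg u = ∑ i, |F i| ≤ Δ·|ι|`. The main terms `|ι|/(Δ·d)` sum to `(|ι|/Δ)·H_D`.
-/

open Finset

lemma sum_card_filter_lt_le {α : Type*} (s : Finset α) (f : α → ℕ) (t : Finset ℕ) :
    ∑ d ∈ t, #{x ∈ s | d < f x} ≤ ∑ x ∈ s, f x :=
  calc ∑ d ∈ t, #{x ∈ s | d < f x} = ∑ x ∈ s, #{d ∈ t | d < f x} := by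
        simp only [card_filter]
        exact sum_comm
    _ ≤ ∑ x ∈ s, f x := sum_le_sum fun x _ =>
        (card_le_card fun d hd => mem_range.2 (mem_filter.1 hd).2).trans (card_range _).le

namespace SetFamily

variable {U ι : Type*} [DecidableEq U] [Fintype ι]

def degree (F : ι → Finset U) (u : U) : ℕ := #{i | u ∈ F i}

lemma degree_le_card (F : ι → Finset U) (u : U) : degree F u ≤ Fintype.card ι :=
  card_filter_le _ _

lemma sum_degree [Fintype U] (F : ι → Finset U) : ∑ u, degree F u = ∑ i, #(F i) := by
  simpa [degree, bipartiteAbove, bipartiteBelow, filter_mem_eq_inter] using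
    sum_card_bipartiteAbove_eq_sum_card_bipartiteBelow (r := fun u i => u ∈ F i)
      (s := univ) (t := univ)

lemma card_degree_gt [Fintype U] (F : ι → Finset U) (d : ℕ) :
    #{u | d < degree F u} = ∑ k ∈ Icc (d + 1) (Fintype.card ι), #{u | degree F u = k} := by
  rw [sum_card_fiberwise_eq_card_filter]
  congr 1
  ext u
  have := degree_le_card F u
  simp only [mem_filter, mem_univ, true_and, mem_Icc]
  omega

lemma sum_card_degree_gt_le [Fintype U] {Δ : ℕ} (F : ι → Finset U) (hF : ∀ i, #(F i) ≤ Δ)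
    (t : Finset ℕ) :
    ∑ d ∈ t, #{u | d < degree F u} ≤ Δ * Fintype.card ι :=
  calc ∑ d ∈ t, #{u | d < degree F u} ≤ ∑ u, degree F u := sum_card_filter_lt_le _ _ _
    _ = ∑ i, #(F i) := sum_degree F
    _ ≤ ∑ _i : ι, Δ := sum_le_sum fun i _ => hF i
    _ = Δ * Fintype.card ι := by rw [sum_const, card_univ, smul_eq_mul, mul_comm]

end SetFamily

open SetFamily in
theorem sum_V_ge_harmonic_general
    {U : Type*} [Fintype U] [DecidableEq U] {ι : Type*} [Fintype ι]
    (Δ : ℕ) (C : ℝ) (hC : 0 ≤ C)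
    (F : ι → Finset U) (hF : ∀ i, (F i).card ≤ Δ)
    (D : ℕ) :
    (Fintype.card ι : ℝ) / Δ * (∑ k ∈ Finset.Icc 1 D, (1 : ℝ) / k)
        - C * Δ * Fintype.card ι
      ≤ ∑ d ∈ Finset.Icc 1 D,
          ((Fintype.card ι : ℝ) / (Δ * d)
            - C * ∑ i ∈ Finset.Icc (d + 1) (Fintype.card ι),
                ((Finset.univ.filter fun u : U =>
                    (Finset.univ.filter fun j : ι => u ∈ F j).card = i).card : ℝ)) := by
  set n := Fintype.card ι
  have harmonic : ∑ d ∈ Icc 1 D, (n : ℝ) / (Δ * d) = n / Δ * ∑ k ∈ Icc 1 D, (1 : ℝ) / k := by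
    rw [mul_sum]
    refine sum_congr rfl fun d _ => ?_
    field_simp
  have correction : ∑ d ∈ Icc 1 D, ∑ k ∈ Icc (d + 1) n, (#{u | degree F u = k} : ℝ) ≤ Δ * n := by
    have := sum_card_degree_gt_le F hF (Icc 1 D)
    simp only [card_degree_gt] at this
    exact_mod_cast this
  rw [sum_sub_distrib, ← mul_sum, harmonic, mul_assoc]
  exact sub_le_sub_left (mul_le_mul_of_nonneg_left correction hC) _

/-- For `V(d) = |ι|/(Δ·d) − C·∑_{i=d+1}^{|ι|} U(i)` one has, for every `D ≥ 1`,
`∑_{d=1}^{D} V(d) ≥ (|ι|/Δ)·H_D − C·Δ·|ι|`, where `H_D` is the `D`-th harmonic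
number and `U(i)` counts universe elements of degree exactly `i`. -/
theorem sum_V_ge_harmonic
    {U : Type*} [Fintype U] [DecidableEq U] {ι : Type*} [Fintype ι] [DecidableEq ι]
    (Δ : ℕ) (hΔ : 1 ≤ Δ) (C : ℝ) (hC : 0 ≤ C)
    (F : ι → Finset U) (hF : ∀ i, (F i).card ≤ Δ)
    (D : ℕ) (hD : 1 ≤ D) :
    (Fintype.card ι : ℝ) / Δ * (∑ k ∈ Finset.Icc 1 D, (1 : ℝ) / k)
        - C * Δ * Fintype.card ι
      ≤ ∑ d ∈ Finset.Icc 1 D,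
          ((Fintype.card ι : ℝ) / (Δ * d)
            - C * ∑ i ∈ Finset.Icc (d + 1) (Fintype.card ι),
                ((Finset.univ.filter fun u : U =>
                    (Finset.univ.filter fun j : ι => u ∈ F j).card = i).card : ℝ)) :=
  sum_V_ge_harmonic_general Δ C hC F hF D
end

section
/- Upper bound construction for the removal lemma: For all positive integers C, Δ, n there exist a finite set U and a family (F_i)_{i∈ι} of subsets of U indexed by a finite set ι with |ι| = (C+1)^Δ · n and |F_i| = Δ for every i ∈ ι, such that for every ι' ⊆ ι and every U' ⊆ U satisfying F_i ∩ F_j ⊆ U' for all distinct i, j ∈ ι', one has |ι'| ≤ n + C·|U'|. -/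
/-!
Index the sets by pairs (tree `t < n`, word `w` of length `Δ` over `C + 1` letters) and let
the set of `(t, w)` consist of the vertices `(t, p)` for the proper prefixes `p` of `w`: these are
the root-to-leaf paths of `n` disjoint `(C+1)`-ary tries of depth `Δ - 1`, each taken `C + 1`
times. If the sets of `ι'` become pairwise disjoint after deleting `U'`, then inside one tree every
common prefix of two distinct words of `ι'` lies in `U'`. For a set `S` of words of equal length
whose common prefixes lie in `W` one has `|S| ≤ 1 + C·|W|`, by induction on the length: once
`|S| ≥ 2` the root `[]` is in `W`, and splitting `S` by first letter into at most `C + 1` parts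
costs `C + 1 ≤ 1 + C·1` for the root. Summing over the `n` trees gives `|ι'| ≤ n + C·|U'|`.
-/

open Finset Function

section Preimage

variable {T V X : Type*} [Fintype T] {g : T → V → X}

theorem Function.Injective2.sum_card_preimage_le (hg : Injective2 g) (s : Finset X) :
    ∑ t, #(s.preimage (g t) (hg.right t).injOn) ≤ #s := by
  rw [← card_sigma]
  refine card_le_card_of_injOn (fun p => g p.1 p.2) (fun p hp => ?_) fun p _ q _ hpq => ?_
  · simpa using hp
  · obtain ⟨h1, h2⟩ := hg hpq
    exact Sigma.ext h1 (heq_of_eq h2)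

theorem Function.Injective2.sum_card_preimage_eq (hg : Injective2 g) {s : Finset X}
    (hs : ∀ x ∈ s, ∃ t v, g t v = x) :
    ∑ t, #(s.preimage (g t) (hg.right t).injOn) = #s := by
  refine (hg.sum_card_preimage_le s).antisymm ?_
  rw [← card_sigma]
  refine card_le_card_of_surjOn (fun p => g p.1 p.2) fun x hx => ?_
  obtain ⟨t, v, rfl⟩ := hs x hx
  exact ⟨⟨t, v⟩, by simpa using hx, rfl⟩

end Preimage

theorem List.injective2_cons {α : Type*} : Injective2 (@List.cons α) :=
  fun _ _ _ _ h => List.cons.inj h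

section Trie

variable {α : Type*}

theorem card_le_one_of_nil_notMem {S W : Finset (List α)}
    (hW : ∀ x ∈ S, ∀ y ∈ S, x ≠ y → ∀ p, p <+: x → p <+: y → p ∈ W)
    (hnil : [] ∉ W) : #S ≤ 1 :=
  card_le_one.2 fun x hx y hy =>
    by_contra fun hxy => hnil (hW x hx y hy hxy [] List.nil_prefix List.nil_prefix)

theorem card_le_one_add_mul_card_of_common_prefix_mem [Fintype α] {C : ℕ}
    (hα : Fintype.card α ≤ C + 1) {k : ℕ} {S W : Finset (List α)}
    (hS : ∀ x ∈ S, x.length = k)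
    (hW : ∀ x ∈ S, ∀ y ∈ S, x ≠ y → ∀ p, p <+: x → p <+: y → p ∈ W) :
    #S ≤ 1 + C * #W := by
  classical
  induction k generalizing S W with
  | zero =>
    refine (card_le_one.2 fun x hx y hy => ?_).trans (Nat.le_add_right 1 _)
    rw [List.eq_nil_of_length_eq_zero (hS x hx), List.eq_nil_of_length_eq_zero (hS y hy)]
  | succ k ih =>
    by_cases hnil : [] ∉ W
    · exact (card_le_one_of_nil_notMem hW hnil).trans (Nat.le_add_right 1 _)
    rw [not_not] at hnil
    let below (a : α) (s : Finset (List α)) :=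
      s.preimage (a :: ·) (List.injective2_cons.right a).injOn
    have hfiber (a : α) : #(below a S) ≤ 1 + C * #(below a W) := by
      refine ih (fun x hx => ?_) fun x hx y hy hxy p hpx hpy => ?_
      · simpa using hS _ (mem_preimage.1 hx)
      · exact mem_preimage.2 <| hW _ (mem_preimage.1 hx) _ (mem_preimage.1 hy)
          (by simpa using hxy) _ (List.cons_prefix_cons.2 ⟨rfl, hpx⟩)
          (List.cons_prefix_cons.2 ⟨rfl, hpy⟩)
    have hbelow_erase (a : α) : below a W = below a (W.erase []) := by
      ext; simp [below]
    calc #S = ∑ a, #(below a S) := by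
          refine (List.injective2_cons.sum_card_preimage_eq fun x hx => ?_).symm
          obtain ⟨a, l, rfl⟩ := List.exists_cons_of_length_eq_add_one (hS x hx)
          exact ⟨a, l, rfl⟩
      _ ≤ ∑ a, (1 + C * #(below a W)) := sum_le_sum fun a _ => hfiber a
      _ = Fintype.card α + C * ∑ a, #(below a (W.erase [])) := by
          simp only [sum_add_distrib, ← mul_sum, hbelow_erase, sum_const, card_univ,
            smul_eq_mul, mul_one]
      _ ≤ (C + 1) + C * #(W.erase []) := by
          gcongr
          exact List.injective2_cons.sum_card_preimage_le _
      _ = 1 + C * #W := by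
          rw [← card_erase_add_one hnil]
          ring

end Trie

theorem Prod.injective2_mk {α β : Type*} : Injective2 (@Prod.mk α β) :=
  fun _ _ _ _ h => Prod.mk.inj h

def RemovalBound {ι V : Type*} [DecidableEq V] (n C : ℕ) (F : ι → Finset V) : Prop :=
  ∀ (ι' : Finset ι) (U' : Finset V),
    (∀ i ∈ ι', ∀ j ∈ ι', i ≠ j → F i ∩ F j ⊆ U') → #ι' ≤ n + C * #U'

namespace RemovalBound

variable {ι V : Type*} [DecidableEq V] {n C : ℕ} {F : ι → Finset V}

theorem comp_equiv {κ : Type*} (h : RemovalBound n C F) (e : κ ≃ ι) :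
    RemovalBound n C (F ∘ e) := fun ι' U' hU' => by
  refine (card_map e.toEmbedding).symm.trans_le (h _ U' fun _ hi _ hj hij => ?_)
  obtain ⟨i, hi', rfl⟩ := mem_map.1 hi
  obtain ⟨j, hj', rfl⟩ := mem_map.1 hj
  exact hU' i hi' j hj' (ne_of_apply_ne _ hij)

theorem map {X : Type*} [DecidableEq X] (h : RemovalBound n C F) (f : V ↪ X) :
    RemovalBound n C fun i => (F i).map f := fun ι' U' hU' => by
  refine (h ι' (U'.preimage f f.injective.injOn) fun i hi j hj hij v hv => ?_).trans ?_
  · rw [mem_preimage]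
    exact hU' i hi j hj hij (by simpa [← map_inter] using hv)
  · gcongr
    exact card_le_card_of_injOn f (fun v hv => mem_preimage.1 hv) f.injective.injOn

theorem prod {T : Type*} [Fintype T] [DecidableEq T] (h : RemovalBound n C F) :
    RemovalBound (Fintype.card T * n) C fun i : T × ι => {i.1} ×ˢ F i.2 := by
  intro ι' U' hU'
  have hslice (t : T) : #(ι'.preimage (Prod.mk t) (Prod.injective2_mk.right t).injOn) ≤
      n + C * #(U'.preimage (Prod.mk t) (Prod.injective2_mk.right t).injOn) := by
    refine h _ _ fun i hi j hj hij v hv => mem_preimage.2 ?_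
    refine hU' _ (mem_preimage.1 hi) _ (mem_preimage.1 hj) (by simpa using hij) ?_
    simpa [product_inter_product] using hv
  calc #ι' = ∑ t, #(ι'.preimage (Prod.mk t) (Prod.injective2_mk.right t).injOn) :=
        (Prod.injective2_mk.sum_card_preimage_eq fun x _ => ⟨x.1, x.2, rfl⟩).symm
    _ ≤ ∑ t, (n + C * #(U'.preimage (Prod.mk t) (Prod.injective2_mk.right t).injOn)) :=
        sum_le_sum fun t _ => hslice t
    _ ≤ Fintype.card T * n + C * #U' := by
        simp only [sum_add_distrib, ← mul_sum, sum_const, card_univ, smul_eq_mul]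
        gcongr
        exact Prod.injective2_mk.sum_card_preimage_le U'

end RemovalBound

section TreePath

variable {α : Type*} [DecidableEq α] {k : ℕ}

def treePath (k : ℕ) (w : Fin k → α) : Finset (List α) :=
  (range k).image fun d => (List.ofFn w).take d

theorem mem_treePath {w : Fin k → α} {p : List α} :
    p ∈ treePath k w ↔ p <+: List.ofFn w ∧ p.length < k := by
  simp only [treePath, mem_image, mem_range, List.prefix_iff_eq_take (l₁ := p)]
  constructor
  · rintro ⟨d, hd, rfl⟩
    simp [Nat.min_eq_left hd.le, hd]
  · rintro ⟨hp, hlen⟩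
    exact ⟨p.length, hlen, hp.symm⟩

theorem card_treePath (w : Fin k → α) : #(treePath k w) = k := by
  refine (card_image_of_injOn fun d hd d' hd' h => ?_).trans (card_range k)
  simpa [Nat.min_eq_left (mem_range.1 hd).le, Nat.min_eq_left (mem_range.1 hd').le]
    using congrArg List.length h

theorem removalBound_treePath [Fintype α] {C : ℕ} (hα : Fintype.card α ≤ C + 1) :
    RemovalBound 1 C (treePath (α := α) k) := fun ι' U' hU' => by
  refine (card_map ⟨List.ofFn, List.ofFn_injective⟩).symm.trans_le <|
    card_le_one_add_mul_card_of_common_prefix_mem hα (k := k) (by simp)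
      fun x hx y hy hxy p hpx hpy => ?_
  obtain ⟨w, hw, rfl⟩ := mem_map.1 hx
  obtain ⟨w', hw', rfl⟩ := mem_map.1 hy
  have hlen : p.length < k := by
    refine (hpx.length_le.trans (List.length_ofFn).le).lt_of_ne fun hk => hxy ?_
    rw [← hpx.eq_of_length (by simpa using hk), hpy.eq_of_length (by simpa using hk)]
  exact hU' w hw w' hw' (ne_of_apply_ne _ hxy)
    (mem_inter.2 ⟨mem_treePath.2 ⟨hpx, hlen⟩, mem_treePath.2 ⟨hpy, hlen⟩⟩)

end TreePath

theorem removal_lemma_upper_bound_general (C Δ n : ℕ) :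
    ∃ F : Fin ((C + 1) ^ Δ * n) → Finset ℕ,
      (∀ i, (F i).card = Δ) ∧
      ∀ (ι' : Finset (Fin ((C + 1) ^ Δ * n))) (U' : Finset ℕ),
        (∀ i ∈ ι', ∀ j ∈ ι', i ≠ j → F i ∩ F j ⊆ U') →
        ι'.card ≤ n + C * U'.card := by
  let e : Fin ((C + 1) ^ Δ * n) ≃ Fin n × (Fin Δ → Fin (C + 1)) :=
    (Fintype.equivFinOfCardEq (by simp [mul_comm])).symm
  refine ⟨fun i => ({(e i).1} ×ˢ treePath Δ (e i).2).map (Encodable.encode' _),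
    fun i => by simp [card_treePath], ?_⟩
  have h : RemovalBound (Fintype.card (Fin n) * 1) C _ :=
    ((removalBound_treePath (by simp)).prod.comp_equiv e).map (Encodable.encode' _)
  simpa [RemovalBound] using h

/-- **Upper bound construction for the removal lemma.**
For all positive integers `C, Δ, n` there is a family of `(C+1)^Δ · n` sets
of size `Δ` (subsets of the finite universe `U`, here realized as finite
subsets of `ℕ`) such that every sub-family `ι'` that becomes pairwise disjoint
after removing a set `U'` of universe elements satisfies `|ι'| ≤ n + C·|U'|`. -/
theorem removal_lemma_upper_bound (C Δ n : ℕ) (hC : 0 < C) (hΔ : 0 < Δ) (hn : 0 < n) :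
    ∃ F : Fin ((C + 1) ^ Δ * n) → Finset ℕ,
      (∀ i, (F i).card = Δ) ∧
      ∀ (ι' : Finset (Fin ((C + 1) ^ Δ * n))) (U' : Finset ℕ),
        (∀ i ∈ ι', ∀ j ∈ ι', i ≠ j → F i ∩ F j ⊆ U') →
        ι'.card ≤ n + C * U'.card :=
  removal_lemma_upper_bound_general C Δ n
end

section
/- Let G be a simple graph on a finite vertex set V in which every vertex has degree at most Δ. Then there exists a set S ⊆ V with (1 + Δ²)·|S| ≥ |V| such that any two distinct vertices s₁, s₂ ∈ S are non-adjacent and have no common neighbor (i.e., the distance in G between any two distinct vertices of S is at least three). -/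
section Aux

variable {V : Type*} [Fintype V] [DecidableEq V] (G : SimpleGraph V) [DecidableRel G.Adj]

/-- closed ball of radius 2 around v -/
private def ball2 (v : V) : Finset V :=
  insert v (G.neighborFinset v ∪
    (G.neighborFinset v).biUnion (fun u => (G.neighborFinset u).erase v))

private lemma ball2_card_le (Δ : ℕ) (hdeg : ∀ v : V, G.degree v ≤ Δ) (v : V) :
    (ball2 G v).card ≤ 1 + Δ ^ 2 := by
  have h1 : ((G.neighborFinset v).biUnion
      (fun u => (G.neighborFinset u).erase v)).card ≤ Δ * (Δ - 1) := by
    calc _ ≤ ∑ u ∈ G.neighborFinset v, ((G.neighborFinset u).erase v).card :=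
          Finset.card_biUnion_le
      _ ≤ ∑ u ∈ G.neighborFinset v, (Δ - 1) := by
          apply Finset.sum_le_sum
          intro u hu
          have hv : v ∈ G.neighborFinset u := by
            rw [SimpleGraph.mem_neighborFinset] at hu ⊢
            exact hu.symm
          rw [Finset.card_erase_of_mem hv]
          have := hdeg u
          rw [SimpleGraph.degree] at this
          omega
      _ ≤ Δ * (Δ - 1) := by
          rw [Finset.sum_const, smul_eq_mul]
          have := hdeg v
          rw [SimpleGraph.degree] at this
          exact Nat.mul_le_mul_right _ this
  have h2 : (ball2 G v).card ≤ 1 + (Δ + Δ * (Δ - 1)) := by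
    unfold ball2
    calc _ ≤ (G.neighborFinset v ∪
          (G.neighborFinset v).biUnion (fun u => (G.neighborFinset u).erase v)).card + 1 :=
        Finset.card_insert_le _ _
      _ ≤ ((G.neighborFinset v).card +
          ((G.neighborFinset v).biUnion (fun u => (G.neighborFinset u).erase v)).card) + 1 := by
          exact Nat.add_le_add_right (Finset.card_union_le _ _) 1
      _ ≤ _ := by
          have := hdeg v
          rw [SimpleGraph.degree] at this
          omega
  refine le_trans h2 ?_
  cases Δ with
  | zero => simp
  | succ n =>
    have : (n + 1) + (n + 1) * (n + 1 - 1) = (n + 1) ^ 2 := by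
      simp [Nat.succ_sub_one]; ring
    omega

private lemma aux (Δ : ℕ) (hdeg : ∀ v : V, G.degree v ≤ Δ) :
    ∀ n (A : Finset V), A.card ≤ n → ∃ S : Finset V,
      (∀ s ∈ S, s ∈ A) ∧ A.card ≤ (1 + Δ ^ 2) * S.card ∧
      ∀ s₁ ∈ S, ∀ s₂ ∈ S, s₁ ≠ s₂ →
        ¬ G.Adj s₁ s₂ ∧ ∀ w : V, ¬ (G.Adj s₁ w ∧ G.Adj s₂ w) := by
  intro n
  induction n with
  | zero =>
    intro A hA
    refine ⟨∅, by simp, by simpa using hA, by simp⟩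
  | succ n ih =>
    intro A hA
    rcases A.eq_empty_or_nonempty with rfl | ⟨v, hv⟩
    · exact ⟨∅, by simp, by simp, by simp⟩
    · set A' := A \ ball2 G v with hA'def
      have hvb : v ∈ ball2 G v := Finset.mem_insert_self _ _
      have hcard : A'.card ≤ n := by
        have : A'.card < A.card :=
          Finset.card_lt_card (Finset.ssubset_iff_of_subset (Finset.sdiff_subset)
            |>.mpr ⟨v, hv, by simp [hA'def, hvb]⟩)
        omega
      obtain ⟨S', hS'sub, hS'card, hS'good⟩ := ih A' hcard
      have hvS' : v ∉ S' := fun h => by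
        have := hS'sub v h
        simp [hA'def, hvb] at this
      have hnotball : ∀ s ∈ S', s ∉ ball2 G v := by
        intro s hs
        have := hS'sub s hs
        simp only [hA'def, Finset.mem_sdiff] at this
        exact this.2
      -- key: if s ∉ ball2 v then conditions hold
      have key : ∀ s, s ∉ ball2 G v →
          ¬ G.Adj v s ∧ ∀ w : V, ¬ (G.Adj v w ∧ G.Adj s w) := by
        intro s hs
        simp only [ball2, Finset.mem_insert, Finset.mem_union, Finset.mem_biUnion,
          Finset.mem_erase, SimpleGraph.mem_neighborFinset, not_or, not_exists] at hs
        obtain ⟨hne, hadj, hcom⟩ := hs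
        refine ⟨fun h => hadj h, fun w ⟨h1, h2⟩ => ?_⟩
        exact (hcom w) ⟨h1, hne, h2.symm⟩
      refine ⟨insert v S', ?_, ?_, ?_⟩
      · intro s hs
        rcases Finset.mem_insert.mp hs with rfl | hs
        · exact hv
        · exact Finset.mem_sdiff.mp (hS'sub s hs) |>.1
      · have hsplit : A.card ≤ (A ∩ ball2 G v).card + A'.card := by
          have : A ⊆ (A ∩ ball2 G v) ∪ A' := by
            intro x hx
            by_cases hxb : x ∈ ball2 G v
            · exact Finset.mem_union_left _ (Finset.mem_inter.mpr ⟨hx, hxb⟩)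
            · exact Finset.mem_union_right _ (Finset.mem_sdiff.mpr ⟨hx, hxb⟩)
          calc A.card ≤ ((A ∩ ball2 G v) ∪ A').card := Finset.card_le_card this
            _ ≤ _ := Finset.card_union_le _ _
        have hball : (A ∩ ball2 G v).card ≤ 1 + Δ ^ 2 :=
          le_trans (Finset.card_le_card (Finset.inter_subset_right)) (ball2_card_le G Δ hdeg v)
        rw [Finset.card_insert_of_notMem hvS', Nat.mul_add, Nat.mul_one]
        omega
      · intro s₁ hs₁ s₂ hs₂ hne
        rcases Finset.mem_insert.mp hs₁ with rfl | h1 <;>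
          rcases Finset.mem_insert.mp hs₂ with rfl | h2
        · exact absurd rfl hne
        · exact key s₂ (hnotball s₂ h2)
        · obtain ⟨ha, hc⟩ := key s₁ (hnotball s₁ h1)
          exact ⟨fun h => ha h.symm, fun w hw => hc w ⟨hw.2, hw.1⟩⟩
        · exact hS'good s₁ h1 s₂ h2 hne

end Aux

/-- In a graph of maximum degree at most `Δ` there is a set `S` of vertices
with `(1 + Δ²)·|S| ≥ |V|` such that any two distinct vertices of `S` are
non-adjacent and share no common neighbor (distance at least three). -/
theorem exists_distance_three_set
    {V : Type*} [Fintype V] [DecidableEq V] (G : SimpleGraph V) [DecidableRel G.Adj]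
    (Δ : ℕ) (hdeg : ∀ v : V, G.degree v ≤ Δ) :
    ∃ S : Finset V,
      Fintype.card V ≤ (1 + Δ ^ 2) * S.card ∧
      ∀ s₁ ∈ S, ∀ s₂ ∈ S, s₁ ≠ s₂ →
        ¬ G.Adj s₁ s₂ ∧ ∀ w : V, ¬ (G.Adj s₁ w ∧ G.Adj s₂ w) := by
  obtain ⟨S, -, hcard, hgood⟩ := aux G Δ hdeg (Finset.univ.card) Finset.univ le_rfl
  exact ⟨S, by simpa [Finset.card_univ] using hcard, hgood⟩
end

section
/- For every k ∈ ℕ and every S' ⊆ S, the integer h(S') := ∑_{V' ⊆ V∖S} (−1)^{|V∖S| − |V'|} · β(V', S')^k equals the number of k-tuples (I₀, …, I_{k−1}) of independent sets in G contained in V∖S such that I₀ ∪ … ∪ I_{k−1} = V∖S and I_t ∩ N(s) ≠ ∅ for every s ∈ S' and every 0 ≤ t ≤ k−1. -/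
/-!
Expanding `β(V', S')^k` counts the `k`-tuples of admissible independent sets whose union lies
in `V'`. Summing against the signs `(-1)^{|V∖S| - |V'|}` is Möbius inversion on the Boolean
lattice of subsets of `V∖S`: a tuple with union `U` contributes `∑_{U ⊆ V' ⊆ V∖S} (-1)^{|V∖S∖V'|}`,
which vanishes unless `U = V∖S`.
-/

/-- `beta G S' V'` is `β(V', S')`: the number of independent sets `I ⊆ V'` of `G`
that intersect the neighborhood `N(s)` for every `s ∈ S'`. -/
def beta {V : Type*} [Fintype V] [DecidableEq V] (G : SimpleGraph V) [DecidableRel G.Adj]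
    (V' S' : Finset V) : ℕ :=
  (V'.powerset.filter fun I =>
    (∀ u ∈ I, ∀ v ∈ I, ¬ G.Adj u v) ∧ ∀ s ∈ S', I ∩ G.neighborFinset s ≠ ∅).card

open Finset

section MoebiusInversion

variable {α ι : Type*} [DecidableEq α]

lemma sum_powerset_neg_one_pow_card_sub_mul_ite_subset (U W : Finset α) :
    ∑ V' ∈ W.powerset, (-1 : ℤ) ^ (#W - #V') * (if U ⊆ V' then 1 else 0)
      = if U = W then 1 else 0 := by
  by_cases hUW : U ⊆ W
  swap
  · rw [if_neg fun h => hUW h.le]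
    refine sum_eq_zero fun V' hV' => ?_
    rw [if_neg fun h => hUW (h.trans (mem_powerset.1 hV')), mul_zero]
  calc ∑ V' ∈ W.powerset, (-1 : ℤ) ^ (#W - #V') * (if U ⊆ V' then 1 else 0)
      = ∑ X ∈ (W \ U).powerset, (-1 : ℤ) ^ #X := by
        simp only [mul_boole]
        rw [← sum_filter]
        refine sum_nbij' (W \ ·) (W \ ·) ?_ ?_ ?_ ?_ ?_ <;> simp only [mem_filter, mem_powerset]
        · exact fun V' hV' => sdiff_subset_sdiff subset_rfl hV'.2
        · exact fun X hX => ⟨sdiff_subset, subset_sdiff.2 ⟨hUW, disjoint_sdiff.mono_right hX⟩⟩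
        · exact fun V' hV' => Finset.sdiff_sdiff_eq_self hV'.1
        · exact fun X hX => Finset.sdiff_sdiff_eq_self (hX.trans sdiff_subset)
        · exact fun V' hV' => by rw [card_sdiff_of_subset hV'.1]
    _ = if U = W then 1 else 0 := by
        rw [sum_powerset_neg_one_pow_card]
        exact if_congr (sdiff_eq_empty_iff_subset.trans ⟨hUW.antisymm, fun h => h ▸ subset_rfl⟩)
          rfl rfl

lemma sum_powerset_neg_one_pow_mul_card_filter_subset (T : Finset ι) (σ : ι → Finset α)
    (W : Finset α) :
    ∑ V' ∈ W.powerset, (-1 : ℤ) ^ (#W - #V') * #{x ∈ T | σ x ⊆ V'} = #{x ∈ T | σ x = W} := by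
  simp only [card_filter, Nat.cast_sum, Nat.cast_ite, Nat.cast_one, Nat.cast_zero, mul_sum]
  rw [sum_comm]
  exact sum_congr rfl fun x _ => sum_powerset_neg_one_pow_card_sub_mul_ite_subset (σ x) W

end MoebiusInversion

lemma card_filter_piFinset_biUnion_subset {α ι : Type*} [Fintype α] [DecidableEq α] [Fintype ι]
    [DecidableEq ι] (p : Finset α → Prop) [DecidablePred p] (V' : Finset α) :
    #{f ∈ Fintype.piFinset (fun _ : ι => univ.filter p) | univ.biUnion f ⊆ V'}
      = #{I ∈ V'.powerset | p I} ^ Fintype.card ι := by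
  have h : {f ∈ Fintype.piFinset (fun _ : ι => univ.filter p) | univ.biUnion f ⊆ V'}
      = Fintype.piFinset fun _ => {I ∈ V'.powerset | p I} := by
    ext f
    simp only [mem_filter, Fintype.mem_piFinset, mem_univ, true_and, biUnion_subset, mem_powerset]
    exact ⟨fun ⟨hp, hV'⟩ t => ⟨hV' t trivial, hp t⟩, fun h => ⟨fun t => (h t).2, fun t _ => (h t).1⟩⟩
  rw [h, Fintype.card_piFinset, prod_const, card_univ]

theorem h_counts_covers_meeting_neighborhoods_general
    {V : Type*} [Fintype V] [DecidableEq V] (G : SimpleGraph V) [DecidableRel G.Adj]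
    (S : Finset V)
    (k : ℕ) (S' : Finset V) :
    (∑ V' ∈ (Finset.univ \ S).powerset,
        (-1 : ℤ) ^ ((Finset.univ \ S).card - V'.card) * (beta G V' S' : ℤ) ^ k)
      = Nat.card {f : Fin k → Finset V //
          (∀ t, ∀ u ∈ f t, ∀ v ∈ f t, ¬ G.Adj u v) ∧
          (∀ t, f t ⊆ Finset.univ \ S) ∧
          Finset.univ.biUnion f = Finset.univ \ S ∧
          ∀ s ∈ S', ∀ t, f t ∩ G.neighborFinset s ≠ ∅} := by
  set p : Finset V → Prop := fun I =>
    (∀ u ∈ I, ∀ v ∈ I, ¬ G.Adj u v) ∧ ∀ s ∈ S', I ∩ G.neighborFinset s ≠ ∅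
  have hβ : ∀ V', beta G V' S' ^ k
      = #{f ∈ Fintype.piFinset (fun _ : Fin k => univ.filter p) | univ.biUnion f ⊆ V'} := by
    intro V'
    rw [card_filter_piFinset_biUnion_subset, Fintype.card_fin, beta]
  simp only [← Nat.cast_pow, hβ]
  rw [sum_powerset_neg_one_pow_mul_card_filter_subset, Nat.card_eq_fintype_card,
    Fintype.card_subtype]
  congr 2
  ext f
  simp only [mem_filter, Fintype.mem_piFinset, mem_univ, true_and, p]
  constructor
  · rintro ⟨hp, hU⟩
    exact ⟨fun t => (hp t).1, fun t => hU ▸ subset_biUnion_of_mem f (mem_univ t), hU,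
      fun s hs t => (hp t).2 s hs⟩
  · rintro ⟨hind, -, hU, hmeet⟩
    exact ⟨fun t => ⟨hind t, fun s hs => hmeet s hs t⟩, hU⟩

/-- For every `S' ⊆ S`, the integer
`h(S') = ∑_{V' ⊆ V∖S} (−1)^{|V∖S|−|V'|} · β(V', S')^k`
equals the number of `k`-tuples `(I₀, …, I_{k−1})` of independent sets of `G`
contained in `V∖S` whose union is `V∖S` and with `I_t ∩ N(s) ≠ ∅` for every
`s ∈ S'` and every `t`. -/
theorem h_counts_covers_meeting_neighborhoods
    {V : Type*} [Fintype V] [DecidableEq V] (G : SimpleGraph V) [DecidableRel G.Adj]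
    (S : Finset V) (hS : ∀ u ∈ S, ∀ v ∈ S, ¬ G.Adj u v)
    (k : ℕ) (S' : Finset V) (hS' : S' ⊆ S) :
    (∑ V' ∈ (Finset.univ \ S).powerset,
        (-1 : ℤ) ^ ((Finset.univ \ S).card - V'.card) * (beta G V' S' : ℤ) ^ k)
      = Nat.card {f : Fin k → Finset V //
          (∀ t, ∀ u ∈ f t, ∀ v ∈ f t, ¬ G.Adj u v) ∧
          (∀ t, f t ⊆ Finset.univ \ S) ∧
          Finset.univ.biUnion f = Finset.univ \ S ∧
          ∀ s ∈ S', ∀ t, f t ∩ G.neighborFinset s ≠ ∅} :=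
  h_counts_covers_meeting_neighborhoods_general G S k S'
end

section
/- For every k ∈ ℕ, the integer H := ∑_{S' ⊆ S} (−1)^{|S'|} · ∑_{V' ⊆ V∖S} (−1)^{|V∖S| − |V'|} · β(V', S')^k equals the number of k-tuples (I₀, …, I_{k−1}) of independent sets in G contained in V∖S such that I₀ ∪ … ∪ I_{k−1} = V∖S and for every s ∈ S there exists 0 ≤ t ≤ k−1 with I_t ∩ N(s) = ∅. -/
lemma aux_sum_sign_subset {V : Type*} [DecidableEq V] (U B : Finset V) :
    ∑ V' ∈ U.powerset, (-1:ℤ)^(U.card - V'.card) * (if B ⊆ V' then 1 else 0)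
      = if B = U then 1 else 0 := by
  classical
  simp_rw [mul_ite, mul_one, mul_zero, ← Finset.sum_filter]
  by_cases hB : B ⊆ U
  · have key : ∑ V' ∈ (U.powerset.filter fun V' => B ⊆ V'), (-1:ℤ)^(U.card - V'.card)
        = ∑ D ∈ (U \ B).powerset, (-1:ℤ)^((U \ B).card - D.card) := by
      refine Finset.sum_bij' (fun V' _ => V' \ B) (fun D _ => B ∪ D) ?_ ?_ ?_ ?_ ?_
      · intro V' hV'
        simp only [Finset.mem_filter, Finset.mem_powerset] at hV' ⊢
        exact Finset.sdiff_subset_sdiff hV'.1 le_rfl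
      · intro D hD
        simp only [Finset.mem_powerset] at hD
        simp only [Finset.mem_filter, Finset.mem_powerset]
        exact ⟨Finset.union_subset hB (hD.trans Finset.sdiff_subset), Finset.subset_union_left⟩
      · intro V' hV'
        simp only [Finset.mem_filter, Finset.mem_powerset] at hV'
        exact Finset.union_sdiff_of_subset hV'.2
      · intro D hD
        simp only [Finset.mem_powerset] at hD
        exact Finset.union_sdiff_cancel_left (Finset.disjoint_sdiff.mono_right hD)
      · intro V' hV'
        simp only [Finset.mem_filter, Finset.mem_powerset] at hV'
        congr 1
        have h1 := Finset.card_le_card hV'.1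
        have h2 := Finset.card_le_card hV'.2
        rw [Finset.card_sdiff_of_subset hB, Finset.card_sdiff_of_subset hV'.2]
        omega
    rw [key]
    have key2 : ∑ D ∈ (U \ B).powerset, (-1:ℤ)^((U \ B).card - D.card)
        = ∑ D ∈ (U \ B).powerset, (-1:ℤ)^D.card := by
      refine Finset.sum_nbij' (fun D => (U \ B) \ D) (fun D => (U \ B) \ D) ?_ ?_ ?_ ?_ ?_
      · intro D hD; simp
      · intro D hD; simp
      · intro D hD
        simp only [Finset.mem_powerset] at hD
        exact Finset.sdiff_sdiff_eq_self hD
      · intro D hD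
        simp only [Finset.mem_powerset] at hD
        exact Finset.sdiff_sdiff_eq_self hD
      · intro D hD
        simp only [Finset.mem_powerset] at hD
        rw [Finset.card_sdiff_of_subset hD]
    rw [key2, Finset.sum_powerset_neg_one_pow_card]
    congr 1
    rw [Finset.sdiff_eq_empty_iff_subset]
    exact propext ⟨fun h => Finset.Subset.antisymm hB h, fun h => h ▸ le_rfl⟩
  · rw [if_neg (by rintro rfl; exact hB le_rfl)]
    apply Finset.sum_eq_zero
    intro V' hV'
    simp only [Finset.mem_filter, Finset.mem_powerset] at hV'
    exact absurd (hV'.2.trans hV'.1) hB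

lemma aux_sum_sign_forall {α : Type*} [DecidableEq α] (S : Finset α) (q : α → Prop)
    [DecidablePred q] :
    ∑ S' ∈ S.powerset, (-1:ℤ)^S'.card * (if ∀ s ∈ S', q s then 1 else 0)
      = if ∀ s ∈ S, ¬ q s then 1 else 0 := by
  have h1 : ∀ S' ∈ S.powerset, (-1:ℤ)^S'.card * (if ∀ s ∈ S', q s then 1 else 0)
      = (∏ s ∈ S', (if q s then (-1:ℤ) else 0)) * ∏ s ∈ S \ S', 1 := by
    intro S' _
    rw [Finset.prod_const_one, mul_one, ← Finset.prod_boole, ← Finset.prod_const,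
      ← Finset.prod_mul_distrib]
    exact Finset.prod_congr rfl fun s _ => by split_ifs <;> simp
  rw [Finset.sum_congr rfl h1, ← Finset.prod_add]
  have h2 : ∀ s ∈ S, ((if q s then (-1:ℤ) else 0) + 1) = if ¬ q s then 1 else 0 := by
    intro s _; split_ifs <;> simp_all
  rw [Finset.prod_congr rfl h2, Finset.prod_boole]

lemma ite_one_zero_and {p q : Prop} [Decidable p] [Decidable q] :
    (if p ∧ q then (1:ℤ) else 0) = (if p then 1 else 0) * (if q then 1 else 0) := by
  split_ifs <;> simp_all

/-- The integer
`H = ∑_{S' ⊆ S} (−1)^{|S'|} ∑_{V' ⊆ V∖S} (−1)^{|V∖S|−|V'|} · β(V', S')^k`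
equals the number of `k`-tuples `(I₀, …, I_{k−1})` of independent sets of `G`
contained in `V∖S` whose union is `V∖S` and such that every `s ∈ S` has
`I_t ∩ N(s) = ∅` for at least one `t`. -/
theorem H_counts_extendable_covers
    {V : Type*} [Fintype V] [DecidableEq V] (G : SimpleGraph V) [DecidableRel G.Adj]
    (S : Finset V) (hS : ∀ u ∈ S, ∀ v ∈ S, ¬ G.Adj u v) (k : ℕ) :
    (∑ S' ∈ S.powerset, (-1 : ℤ) ^ S'.card *
        ∑ V' ∈ (Finset.univ \ S).powerset,
          (-1 : ℤ) ^ ((Finset.univ \ S).card - V'.card) * (beta G V' S' : ℤ) ^ k)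
      = Nat.card {f : Fin k → Finset V //
          (∀ t, ∀ u ∈ f t, ∀ v ∈ f t, ¬ G.Adj u v) ∧
          (∀ t, f t ⊆ Finset.univ \ S) ∧
          Finset.univ.biUnion f = Finset.univ \ S ∧
          ∀ s ∈ S, ∃ t, f t ∩ G.neighborFinset s = ∅} := by
  classical
  set U : Finset V := Finset.univ \ S with hU
  -- Step 1: beta^k as a sum over tuples
  have hbeta : ∀ V' S' : Finset V, ((beta G V' S' : ℤ)) ^ k
      = ∑ f : Fin k → Finset V,
          (if (∀ t, f t ⊆ V') ∧ (∀ t, ∀ u ∈ f t, ∀ v ∈ f t, ¬ G.Adj u v)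
              ∧ (∀ t, ∀ s ∈ S', f t ∩ G.neighborFinset s ≠ ∅) then (1:ℤ) else 0) := by
    intro V' S'
    have h0 : (beta G V' S' : ℤ) ^ k
        = ((Fintype.piFinset fun _ : Fin k =>
            V'.powerset.filter fun I =>
              (∀ u ∈ I, ∀ v ∈ I, ¬ G.Adj u v) ∧
                ∀ s ∈ S', I ∩ G.neighborFinset s ≠ ∅).card : ℤ) := by
      rw [Fintype.card_piFinset_const, beta]; push_cast; ring
    rw [h0, ← Finset.filter_univ_mem (Fintype.piFinset fun _ : Fin k =>
      V'.powerset.filter fun I =>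
        (∀ u ∈ I, ∀ v ∈ I, ¬ G.Adj u v) ∧
          ∀ s ∈ S', I ∩ G.neighborFinset s ≠ ∅), Finset.card_filter]
    push_cast
    refine Finset.sum_congr rfl fun f _ => ?_
    congr 1
    simp only [Fintype.mem_piFinset, Finset.mem_filter, Finset.mem_powerset, forall_and]
  -- Step 2: per-tuple double sum
  have hf : ∀ f : Fin k → Finset V,
      (∑ S' ∈ S.powerset, ∑ V' ∈ U.powerset, (-1:ℤ)^S'.card *
          ((-1:ℤ)^(U.card - V'.card) *
          (if (∀ t, f t ⊆ V') ∧ (∀ t, ∀ u ∈ f t, ∀ v ∈ f t, ¬ G.Adj u v)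
              ∧ (∀ t, ∀ s ∈ S', f t ∩ G.neighborFinset s ≠ ∅) then (1:ℤ) else 0)))
      = if ((∀ t, ∀ u ∈ f t, ∀ v ∈ f t, ¬ G.Adj u v) ∧
          (∀ t, f t ⊆ U) ∧ Finset.univ.biUnion f = U ∧
          ∀ s ∈ S, ∃ t, f t ∩ G.neighborFinset s = ∅) then 1 else 0 := by
    intro f
    simp_rw [← Finset.mul_sum]
    have inner : ∀ S' ∈ S.powerset,
        (-1:ℤ)^S'.card * ∑ V' ∈ U.powerset, (-1:ℤ)^(U.card - V'.card) *
          (if (∀ t, f t ⊆ V') ∧ (∀ t, ∀ u ∈ f t, ∀ v ∈ f t, ¬ G.Adj u v)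
              ∧ (∀ t, ∀ s ∈ S', f t ∩ G.neighborFinset s ≠ ∅) then (1:ℤ) else 0)
        = ((if (∀ t, ∀ u ∈ f t, ∀ v ∈ f t, ¬ G.Adj u v) then (1:ℤ) else 0) *
            (if Finset.univ.biUnion f = U then 1 else 0)) *
          ((-1:ℤ)^S'.card *
            (if ∀ s ∈ S', ∀ t, f t ∩ G.neighborFinset s ≠ ∅ then 1 else 0)) := by
      intro S' _
      have hterm : ∀ V' ∈ U.powerset,
          (-1:ℤ)^(U.card - V'.card) *
            (if (∀ t, f t ⊆ V') ∧ (∀ t, ∀ u ∈ f t, ∀ v ∈ f t, ¬ G.Adj u v)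
                ∧ (∀ t, ∀ s ∈ S', f t ∩ G.neighborFinset s ≠ ∅) then (1:ℤ) else 0)
          = ((if (∀ t, ∀ u ∈ f t, ∀ v ∈ f t, ¬ G.Adj u v) then (1:ℤ) else 0) *
              (if ∀ t, ∀ s ∈ S', f t ∩ G.neighborFinset s ≠ ∅ then 1 else 0)) *
            ((-1:ℤ)^(U.card - V'.card) *
              (if Finset.univ.biUnion f ⊆ V' then 1 else 0)) := by
        intro V' _
        rw [ite_one_zero_and, ite_one_zero_and]
        have h1 : (if (∀ t, f t ⊆ V') then (1:ℤ) else 0)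
            = if Finset.univ.biUnion f ⊆ V' then 1 else 0 := by
          congr 1
          simp [Finset.biUnion_subset]
        rw [h1]; ring
      rw [Finset.sum_congr rfl hterm, ← Finset.mul_sum, aux_sum_sign_subset]
      have h2 : (if ∀ t, ∀ s ∈ S', f t ∩ G.neighborFinset s ≠ ∅ then (1:ℤ) else 0)
          = if ∀ s ∈ S', ∀ t, f t ∩ G.neighborFinset s ≠ ∅ then 1 else 0 := by
        congr 1
        exact propext ⟨fun h s hs t => h t s hs, fun h t s hs => h s hs t⟩
      rw [h2]; ring
    rw [Finset.sum_congr rfl inner, ← Finset.mul_sum]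
    have haux : (∑ S' ∈ S.powerset, (-1:ℤ)^S'.card *
          if ∀ s ∈ S', ∀ t, f t ∩ G.neighborFinset s ≠ ∅ then 1 else 0)
        = if ∀ s ∈ S, ¬ ∀ t, f t ∩ G.neighborFinset s ≠ ∅ then 1 else 0 := by
      convert aux_sum_sign_forall S (fun s => ∀ t, f t ∩ G.neighborFinset s ≠ ∅) using 3 with S' _
      congr
    rw [haux]
    rw [← ite_one_zero_and, ← ite_one_zero_and]
    congr 1
    refine propext ⟨fun h => ⟨h.1.1, ?_, h.1.2, fun s hs => ?_⟩, fun h => ⟨⟨h.1, h.2.2.1⟩, fun s hs => ?_⟩⟩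
    · intro t
      rw [← h.1.2]
      exact Finset.subset_biUnion_of_mem f (Finset.mem_univ t)
    · have := h.2 s hs
      push_neg at this
      exact this
    · have := h.2.2.2 s hs
      push_neg
      exact this
  -- Step 3: assemble
  have hR : (Nat.card {f : Fin k → Finset V //
          (∀ t, ∀ u ∈ f t, ∀ v ∈ f t, ¬ G.Adj u v) ∧
          (∀ t, f t ⊆ U) ∧
          Finset.univ.biUnion f = U ∧
          ∀ s ∈ S, ∃ t, f t ∩ G.neighborFinset s = ∅} : ℤ)
      = ∑ f : Fin k → Finset V,
          (if ((∀ t, ∀ u ∈ f t, ∀ v ∈ f t, ¬ G.Adj u v) ∧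
          (∀ t, f t ⊆ U) ∧ Finset.univ.biUnion f = U ∧
          ∀ s ∈ S, ∃ t, f t ∩ G.neighborFinset s = ∅) then (1:ℤ) else 0) := by
    rw [Nat.card_eq_fintype_card, Fintype.card_subtype, Finset.card_filter]
    push_cast
    rfl
  rw [hR]
  simp_rw [hbeta, Finset.mul_sum]
  refine Eq.trans (Finset.sum_congr rfl fun S' _ => Finset.sum_comm)
    (Eq.trans Finset.sum_comm ?_)
  exact Finset.sum_congr rfl fun f _ => hf f
end

section
/- Let G be a simple graph on a finite vertex set V, let S ⊆ V be an independent set in G, and let k ∈ ℕ. Then the integer H := ∑_{S' ⊆ S} (−1)^{|S'|} · ∑_{V' ⊆ V∖S} (−1)^{|V∖S| − |V'|} · β(V', S')^k is positive if and only if G is k-colorable. -/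
open Finset

private lemma sum_pow_sdiff {α : Type*} [DecidableEq α] (C : Finset α) :
    ∑ W ∈ C.powerset, (-1 : ℤ) ^ (C.card - W.card) = if C = ∅ then 1 else 0 := by
  have h : ∀ W ∈ C.powerset, (-1 : ℤ) ^ (C.card - W.card) = (-1) ^ C.card * (-1) ^ W.card := by
    intro W hW
    have hle : W.card ≤ C.card := Finset.card_le_card (Finset.mem_powerset.mp hW)
    have h1 : (-1 : ℤ) ^ (C.card - W.card) * (-1) ^ W.card = (-1) ^ C.card := by
      rw [← pow_add, Nat.sub_add_cancel hle]
    have h2 : (-1 : ℤ) ^ W.card * (-1) ^ W.card = 1 := by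
      rw [← mul_pow]; norm_num
    calc (-1 : ℤ) ^ (C.card - W.card)
        = (-1) ^ (C.card - W.card) * ((-1) ^ W.card * (-1) ^ W.card) := by rw [h2, mul_one]
      _ = ((-1) ^ (C.card - W.card) * (-1) ^ W.card) * (-1) ^ W.card := by ring
      _ = (-1) ^ C.card * (-1) ^ W.card := by rw [h1]
  rw [Finset.sum_congr rfl h, ← Finset.mul_sum, Finset.sum_powerset_neg_one_pow_card]
  split_ifs with hC
  · subst hC; simp
  · simp

private lemma ie_subsets {α : Type*} [DecidableEq α] (A U : Finset α) (hU : U ⊆ A) :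
    ∑ V' ∈ A.powerset, (-1 : ℤ) ^ (A.card - V'.card) * (if U ⊆ V' then 1 else 0)
      = if U = A then 1 else 0 := by
  classical
  have step1 : ∑ V' ∈ A.powerset, (-1 : ℤ) ^ (A.card - V'.card) * (if U ⊆ V' then 1 else 0)
      = ∑ V' ∈ A.powerset.filter (fun V' => U ⊆ V'), (-1 : ℤ) ^ (A.card - V'.card) := by
    rw [Finset.sum_filter]
    exact Finset.sum_congr rfl fun V' _ => by split_ifs <;> simp
  have step2 : ∑ V' ∈ A.powerset.filter (fun V' => U ⊆ V'), (-1 : ℤ) ^ (A.card - V'.card)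
      = ∑ W ∈ (A \ U).powerset, (-1 : ℤ) ^ ((A \ U).card - W.card) := by
    refine Finset.sum_nbij' (fun V' => V' \ U) (fun W => W ∪ U) ?_ ?_ ?_ ?_ ?_
    · intro V' hV'
      rw [Finset.mem_filter, Finset.mem_powerset] at hV'
      exact Finset.mem_powerset.mpr (Finset.sdiff_subset_sdiff hV'.1 le_rfl)
    · intro W hW
      rw [Finset.mem_powerset] at hW
      rw [Finset.mem_filter, Finset.mem_powerset]
      exact ⟨Finset.union_subset (hW.trans Finset.sdiff_subset) hU, Finset.subset_union_right⟩
    · intro V' hV'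
      rw [Finset.mem_filter] at hV'
      exact Finset.sdiff_union_of_subset hV'.2
    · intro W hW
      rw [Finset.mem_powerset] at hW
      have hd : Disjoint W U := Finset.disjoint_of_subset_left hW Finset.sdiff_disjoint
      exact Finset.union_sdiff_cancel_right hd
    · intro V' hV'
      rw [Finset.mem_filter, Finset.mem_powerset] at hV'
      show (-1 : ℤ) ^ (A.card - V'.card) = (-1 : ℤ) ^ ((A \ U).card - (V' \ U).card)
      congr 1
      have h1 : (A \ U).card = A.card - U.card := Finset.card_sdiff_of_subset hU
      have h2 : (V' \ U).card = V'.card - U.card := Finset.card_sdiff_of_subset hV'.2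
      have h3 : U.card ≤ V'.card := Finset.card_le_card hV'.2
      have h4 : V'.card ≤ A.card := Finset.card_le_card hV'.1
      omega
  rw [step1, step2, sum_pow_sdiff]
  have hiff : A \ U = ∅ ↔ U = A := by
    rw [Finset.sdiff_eq_empty_iff_subset]
    exact ⟨fun h => Finset.Subset.antisymm hU h, fun h => h ▸ Finset.Subset.refl _⟩
  simp only [hiff]

private lemma ie_prop {α : Type*} [DecidableEq α] (S : Finset α) (Q : α → Prop)
    [DecidablePred Q] :
    ∑ S' ∈ S.powerset, (-1 : ℤ) ^ S'.card * (if ∀ s ∈ S', Q s then 1 else 0)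
      = if ∀ s ∈ S, ¬ Q s then 1 else 0 := by
  have key := Finset.prod_add (fun s => (-1 : ℤ) * if Q s then 1 else 0) (fun _ => 1) S
  simp only [Finset.prod_const_one, mul_one] at key
  have l1 : ∀ t : Finset α, ∏ s ∈ t, ((-1 : ℤ) * if Q s then 1 else 0)
      = (-1) ^ t.card * (if ∀ s ∈ t, Q s then 1 else 0) := by
    intro t; rw [Finset.prod_mul_distrib, Finset.prod_const, Finset.prod_boole]
  have l2 : ∏ s ∈ S, ((-1 : ℤ) * (if Q s then 1 else 0) + 1)
      = if ∀ s ∈ S, ¬ Q s then 1 else 0 := by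
    rw [← Finset.prod_boole]
    exact Finset.prod_congr rfl fun s _ => by by_cases h : Q s <;> simp [h]
  calc ∑ S' ∈ S.powerset, (-1 : ℤ) ^ S'.card * (if ∀ s ∈ S', Q s then 1 else 0)
      = ∑ S' ∈ S.powerset, ∏ s ∈ S', ((-1 : ℤ) * if Q s then 1 else 0) :=
        Finset.sum_congr rfl fun t _ => (l1 t).symm
    _ = ∏ s ∈ S, ((-1 : ℤ) * (if Q s then 1 else 0) + 1) := key.symm
    _ = if ∀ s ∈ S, ¬ Q s then 1 else 0 := l2

/-- For an independent set `S` of `G`, the integer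
`H = ∑_{S' ⊆ S} (−1)^{|S'|} ∑_{V' ⊆ V∖S} (−1)^{|V∖S|−|V'|} · β(V', S')^k`
is positive iff `G` is `k`-colorable. -/
theorem H_pos_iff_colorable
    {V : Type*} [Fintype V] [DecidableEq V] (G : SimpleGraph V) [DecidableRel G.Adj]
    (S : Finset V) (hS : ∀ u ∈ S, ∀ v ∈ S, ¬ G.Adj u v) (k : ℕ) :
    0 < (∑ S' ∈ S.powerset, (-1 : ℤ) ^ S'.card *
          ∑ V' ∈ (Finset.univ \ S).powerset,
            (-1 : ℤ) ^ ((Finset.univ \ S).card - V'.card) * (beta G V' S' : ℤ) ^ k)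
      ↔ ∃ c : V → Fin k, ∀ u v : V, G.Adj u v → c u ≠ c v := by
  classical
  set A : Finset V := Finset.univ \ S with hA
  set F0 : Finset (Fin k → Finset V) :=
    Fintype.piFinset (fun _ => A.powerset.filter fun I => ∀ u ∈ I, ∀ v ∈ I, ¬ G.Adj u v)
    with hF0
  set T : Finset (Fin k → Finset V) := F0.filter
    (fun f => Finset.univ.biUnion f = A ∧ ∀ s ∈ S, ∃ j, f j ∩ G.neighborFinset s = ∅)
    with hT
  -- Step A : β(V',S')^k as a sum over F0
  have betapow : ∀ V' ∈ A.powerset, ∀ S' : Finset V,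
      ((beta G V' S' : ℤ)) ^ k = ∑ f ∈ F0,
        (if ∀ j, f j ⊆ V' then (1 : ℤ) else 0) *
        (if ∀ j, ∀ s ∈ S', f j ∩ G.neighborFinset s ≠ ∅ then 1 else 0) := by
    intro V' hV' S'
    have hVA : V' ⊆ A := Finset.mem_powerset.mp hV'
    have h1 : (Fintype.piFinset fun _ : Fin k => V'.powerset.filter fun I =>
          (∀ u ∈ I, ∀ v ∈ I, ¬ G.Adj u v) ∧ ∀ s ∈ S', I ∩ G.neighborFinset s ≠ ∅)
        = F0.filter fun f => (∀ j, f j ⊆ V') ∧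
            ∀ j, ∀ s ∈ S', f j ∩ G.neighborFinset s ≠ ∅ := by
      ext f
      simp only [Fintype.mem_piFinset, Finset.mem_filter, Finset.mem_powerset, hF0]
      constructor
      · intro h
        exact ⟨fun j => ⟨(h j).1.trans hVA, (h j).2.1⟩, fun j => (h j).1, fun j => (h j).2.2⟩
      · rintro ⟨h1, h2, h3⟩ j
        exact ⟨h2 j, (h1 j).2, h3 j⟩
    have h2 : beta G V' S' ^ k = (F0.filter fun f => (∀ j, f j ⊆ V') ∧
        ∀ j, ∀ s ∈ S', f j ∩ G.neighborFinset s ≠ ∅).card := by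
      rw [← h1, Fintype.card_piFinset]
      simp [beta, Finset.prod_const]
    rw [← Nat.cast_pow, h2, Finset.card_filter]
    push_cast
    refine Finset.sum_congr rfl fun f _ => ?_
    by_cases hP : ∀ j, f j ⊆ V' <;> by_cases hQ : ∀ j, ∀ s ∈ S', f j ∩ G.neighborFinset s ≠ ∅ <;>
      simp [hP, hQ]
  -- Step B : the main computation
  have key : (∑ S' ∈ S.powerset, (-1 : ℤ) ^ S'.card *
          ∑ V' ∈ A.powerset,
            (-1 : ℤ) ^ (A.card - V'.card) * (beta G V' S' : ℤ) ^ k) = (T.card : ℤ) := by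
    calc ∑ S' ∈ S.powerset, (-1 : ℤ) ^ S'.card *
            ∑ V' ∈ A.powerset, (-1 : ℤ) ^ (A.card - V'.card) * (beta G V' S' : ℤ) ^ k
        = ∑ S' ∈ S.powerset, ∑ V' ∈ A.powerset, ∑ f ∈ F0,
            (-1 : ℤ) ^ S'.card * ((-1 : ℤ) ^ (A.card - V'.card) *
              ((if ∀ j, f j ⊆ V' then (1 : ℤ) else 0) *
               (if ∀ j, ∀ s ∈ S', f j ∩ G.neighborFinset s ≠ ∅ then 1 else 0))) := by
          refine Finset.sum_congr rfl fun S' _ => ?_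
          rw [Finset.mul_sum]
          refine Finset.sum_congr rfl fun V' hV' => ?_
          rw [betapow V' hV' S', Finset.mul_sum, Finset.mul_sum]
      _ = ∑ f ∈ F0, ∑ S' ∈ S.powerset, ∑ V' ∈ A.powerset,
            (-1 : ℤ) ^ S'.card * ((-1 : ℤ) ^ (A.card - V'.card) *
              ((if ∀ j, f j ⊆ V' then (1 : ℤ) else 0) *
               (if ∀ j, ∀ s ∈ S', f j ∩ G.neighborFinset s ≠ ∅ then 1 else 0))) := by
          rw [Finset.sum_congr rfl fun S' (_ : S' ∈ S.powerset) =>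
            (Finset.sum_comm : ∑ V' ∈ A.powerset, ∑ f ∈ F0,
              (-1 : ℤ) ^ S'.card * ((-1 : ℤ) ^ (A.card - V'.card) *
              ((if ∀ j, f j ⊆ V' then (1 : ℤ) else 0) *
               (if ∀ j, ∀ s ∈ S', f j ∩ G.neighborFinset s ≠ ∅ then 1 else 0))) = _)]
          exact Finset.sum_comm
      _ = ∑ f ∈ F0, (if Finset.univ.biUnion f = A ∧
            ∀ s ∈ S, ∃ j, f j ∩ G.neighborFinset s = ∅ then (1 : ℤ) else 0) := by
          refine Finset.sum_congr rfl fun f hf => ?_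
          have hsub : Finset.univ.biUnion f ⊆ A := by
            refine Finset.biUnion_subset.mpr fun j _ => ?_
            have := (Fintype.mem_piFinset.mp hf) j
            rw [Finset.mem_filter, Finset.mem_powerset] at this
            exact this.1
          have inner : ∀ S' : Finset V, ∑ V' ∈ A.powerset,
              (-1 : ℤ) ^ (A.card - V'.card) *
                ((if ∀ j, f j ⊆ V' then (1 : ℤ) else 0) *
                 (if ∀ j, ∀ s ∈ S', f j ∩ G.neighborFinset s ≠ ∅ then 1 else 0))
              = (if Finset.univ.biUnion f = A then (1 : ℤ) else 0) *
                (if ∀ j, ∀ s ∈ S', f j ∩ G.neighborFinset s ≠ ∅ then 1 else 0) := by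
            intro S'
            have hrw : ∀ V' : Finset V, (if ∀ j, f j ⊆ V' then (1 : ℤ) else 0)
                = (if Finset.univ.biUnion f ⊆ V' then (1 : ℤ) else 0) := by
              intro V'
              congr 1
              simp [Finset.biUnion_subset]
            calc ∑ V' ∈ A.powerset, (-1 : ℤ) ^ (A.card - V'.card) *
                  ((if ∀ j, f j ⊆ V' then (1 : ℤ) else 0) *
                   (if ∀ j, ∀ s ∈ S', f j ∩ G.neighborFinset s ≠ ∅ then 1 else 0))
                = (if ∀ j, ∀ s ∈ S', f j ∩ G.neighborFinset s ≠ ∅ then (1 : ℤ) else 0) *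
                   ∑ V' ∈ A.powerset, (-1 : ℤ) ^ (A.card - V'.card) *
                     (if Finset.univ.biUnion f ⊆ V' then (1 : ℤ) else 0) := by
                  rw [Finset.mul_sum]
                  refine Finset.sum_congr rfl fun V' _ => ?_
                  rw [hrw V']; ring
              _ = (if ∀ j, ∀ s ∈ S', f j ∩ G.neighborFinset s ≠ ∅ then (1 : ℤ) else 0) *
                    (if Finset.univ.biUnion f = A then 1 else 0) := by
                  rw [ie_subsets A _ hsub]
              _ = _ := by ring
          calc ∑ S' ∈ S.powerset, ∑ V' ∈ A.powerset,
                (-1 : ℤ) ^ S'.card * ((-1 : ℤ) ^ (A.card - V'.card) *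
                  ((if ∀ j, f j ⊆ V' then (1 : ℤ) else 0) *
                   (if ∀ j, ∀ s ∈ S', f j ∩ G.neighborFinset s ≠ ∅ then 1 else 0)))
              = ∑ S' ∈ S.powerset, (-1 : ℤ) ^ S'.card *
                  ((if Finset.univ.biUnion f = A then (1 : ℤ) else 0) *
                   (if ∀ j, ∀ s ∈ S', f j ∩ G.neighborFinset s ≠ ∅ then 1 else 0)) := by
                refine Finset.sum_congr rfl fun S' _ => ?_
                rw [← inner S', Finset.mul_sum]
            _ = (if Finset.univ.biUnion f = A then (1 : ℤ) else 0) *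
                  ∑ S' ∈ S.powerset, (-1 : ℤ) ^ S'.card *
                    (if ∀ s ∈ S', ∀ j, f j ∩ G.neighborFinset s ≠ ∅ then (1 : ℤ) else 0) := by
                rw [Finset.mul_sum]
                refine Finset.sum_congr rfl fun S' _ => ?_
                have heq : (if ∀ j, ∀ s ∈ S', f j ∩ G.neighborFinset s ≠ ∅ then (1 : ℤ) else 0)
                    = (if ∀ s ∈ S', ∀ j, f j ∩ G.neighborFinset s ≠ ∅ then (1 : ℤ) else 0) := by
                  by_cases h : ∀ s ∈ S', ∀ j, f j ∩ G.neighborFinset s ≠ ∅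
                  · rw [if_pos h, if_pos (fun j s hs => h s hs j)]
                  · rw [if_neg h, if_neg (fun h' => h (fun s hs j => h' j s hs))]
                rw [heq]; ring
            _ = (if Finset.univ.biUnion f = A then (1 : ℤ) else 0) *
                  (if ∀ s ∈ S, ¬ ∀ j, f j ∩ G.neighborFinset s ≠ ∅ then 1 else 0) := by
                have hite : ∀ (p : Prop) (i1 i2 : Decidable p),
                    (@ite ℤ p i1 1 0) = @ite ℤ p i2 1 0 := fun p i1 i2 => by
                  rw [Subsingleton.elim i1 i2]
                have := ie_prop S (fun s => ∀ j, f j ∩ G.neighborFinset s ≠ ∅)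
                exact congrArg _ ((Finset.sum_congr rfl fun S' _ =>
                  congrArg _ (hite _ _ _)).trans (this.trans (hite _ _ _)))
            _ = (if Finset.univ.biUnion f = A ∧
                  ∀ s ∈ S, ∃ j, f j ∩ G.neighborFinset s = ∅ then (1 : ℤ) else 0) := by
                have hiff : (∀ s ∈ S, ¬ ∀ j, f j ∩ G.neighborFinset s ≠ ∅)
                    ↔ (∀ s ∈ S, ∃ j, f j ∩ G.neighborFinset s = ∅) := by
                  refine forall_congr' fun s => imp_congr_right fun _ => ?_
                  push_neg
                  simp
                by_cases h1 : Finset.univ.biUnion f = A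
                · by_cases h2 : ∀ s ∈ S, ∃ j, f j ∩ G.neighborFinset s = ∅
                  · rw [if_pos h1, if_pos (hiff.mpr h2), if_pos ⟨h1, h2⟩, one_mul]
                  · rw [if_pos h1, if_neg (fun h => h2 (hiff.mp h)),
                      if_neg (fun h : (Finset.univ.biUnion f = A) ∧ (∀ s ∈ S, ∃ j, f j ∩ G.neighborFinset s = ∅) => h2 h.2), one_mul]
                · rw [if_neg h1, if_neg (fun h : (Finset.univ.biUnion f = A) ∧ (∀ s ∈ S, ∃ j, f j ∩ G.neighborFinset s = ∅) => h1 h.1), zero_mul]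
      _ = (T.card : ℤ) := by rw [hT, Finset.card_filter]; push_cast; rfl
  rw [key]
  have hpos : (0 : ℤ) < (T.card : ℤ) ↔ T.Nonempty := by
    rw [Int.natCast_pos, Finset.card_pos]
  rw [hpos]
  constructor
  · rintro ⟨f, hf⟩
    rw [hT, Finset.mem_filter] at hf
    obtain ⟨hf0, hfA, hfS⟩ := hf
    have hind : ∀ j, ∀ u ∈ f j, ∀ v ∈ f j, ¬ G.Adj u v := by
      intro j
      have := (Fintype.mem_piFinset.mp hf0) j
      rw [Finset.mem_filter] at this
      exact this.2
    choose jS hjS using hfS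
    have hcov : ∀ v : V, v ∉ S → ∃ j, v ∈ f j := by
      intro v hv
      have hvA : v ∈ A := by simp [hA, hv]
      rw [← hfA] at hvA
      simpa using hvA
    choose jV hjV using hcov
    refine ⟨fun v => if hv : v ∈ S then jS v hv else jV v hv, ?_⟩
    intro u v huv hcuv
    replace hcuv : (if hu' : u ∈ S then jS u hu' else jV u hu')
        = (if hv' : v ∈ S then jS v hv' else jV v hv') := hcuv
    by_cases hu : u ∈ S <;> by_cases hv : v ∈ S
    · exact hS u hu v hv huv
    · rw [dif_pos hu, dif_neg hv] at hcuv
      have h1 : v ∈ f (jS u hu) := hcuv ▸ hjV v hv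
      have h2 : v ∈ G.neighborFinset u := by
        rw [SimpleGraph.mem_neighborFinset]; exact huv
      have h3 := hjS u hu
      have : v ∈ f (jS u hu) ∩ G.neighborFinset u := Finset.mem_inter.mpr ⟨h1, h2⟩
      rw [h3] at this
      simp at this
    · rw [dif_neg hu, dif_pos hv] at hcuv
      have h1 : u ∈ f (jS v hv) := hcuv ▸ hjV u hu
      have h2 : u ∈ G.neighborFinset v := by
        rw [SimpleGraph.mem_neighborFinset]; exact huv.symm
      have h3 := hjS v hv
      have : u ∈ f (jS v hv) ∩ G.neighborFinset v := Finset.mem_inter.mpr ⟨h1, h2⟩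
      rw [h3] at this
      simp at this
    · rw [dif_neg hu, dif_neg hv] at hcuv
      have h1 : u ∈ f (jV v hv) := hcuv ▸ hjV u hu
      exact hind _ u h1 v (hjV v hv) huv
  · rintro ⟨c, hc⟩
    refine ⟨fun j => A.filter (fun v => c v = j), ?_⟩
    rw [hT, Finset.mem_filter]
    refine ⟨?_, ?_, ?_⟩
    · rw [Fintype.mem_piFinset]
      intro j
      rw [Finset.mem_filter, Finset.mem_powerset]
      refine ⟨Finset.filter_subset _ _, ?_⟩
      intro u hu v hv hadj
      rw [Finset.mem_filter] at hu hv
      exact hc u v hadj (hu.2.trans hv.2.symm)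
    · ext v
      simp only [Finset.mem_biUnion, Finset.mem_filter, Finset.mem_univ, true_and]
      exact ⟨fun ⟨j, hj, _⟩ => hj, fun hv => ⟨c v, hv, rfl⟩⟩
    · intro s hs
      refine ⟨c s, ?_⟩
      rw [Finset.eq_empty_iff_forall_notMem]
      intro v hv
      rw [Finset.mem_inter, Finset.mem_filter, SimpleGraph.mem_neighborFinset] at hv
      exact hc s v hv.2 hv.1.2.symm
end

section
/- Suppose S ⊆ V is an independent set in G and the neighborhoods N(s), s ∈ S, are pairwise disjoint. Then for every S' ⊆ S, 2^{∑_{s∈S'} |N(s)|} · |B(S')| = 2^{|V∖S|} · ∏_{s∈S'} (2^{|N(s)|} − 1). -/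
/-!
Put `U = V ∖ S`. Independence puts every `N(s)`, `s ∈ S`, inside `U`, and disjointness makes
"`W` meets `N(t)`" for `t ≠ s` depend only on `W ∖ N(s)`. Splitting `W ⊆ U` as
`(W ∩ N(s), W ∖ N(s))`, the first component ranges freely over the subsets of `N(s)`, so adding
`s` to `S'` multiplies `|B(S')|` by `(2^{|N(s)|} - 1) / 2^{|N(s)|}`; induction on `S'` gives the
formula, cleared of denominators.
-/

/-- `Bset G S S'` is `B(S')`: the collection of all subsets `V' ⊆ V∖S` with
`V' ∩ N(s) ≠ ∅` for every `s ∈ S'`. -/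
def Bset {V : Type*} [Fintype V] [DecidableEq V] (G : SimpleGraph V) [DecidableRel G.Adj]
    (S S' : Finset V) : Finset (Finset V) :=
  (Finset.univ \ S).powerset.filter fun V' => ∀ s ∈ S', V' ∩ G.neighborFinset s ≠ ∅

open Finset

namespace Finset

variable {α ι : Type*} [DecidableEq α]

lemma union_inter_eq_left_of_subset_of_disjoint {A B N : Finset α} (hA : A ⊆ N)
    (hB : Disjoint B N) : (A ∪ B) ∩ N = A := by
  rw [union_inter_distrib_right, inter_eq_left.mpr hA, disjoint_iff_inter_eq_empty.mp hB,
    union_empty]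

lemma union_sdiff_eq_right_of_subset_of_disjoint {A B N : Finset α} (hA : A ⊆ N)
    (hB : Disjoint B N) : (A ∪ B) \ N = B := by
  rw [union_sdiff_distrib, sdiff_eq_empty_iff_subset.mpr hA, empty_union,
    sdiff_eq_self_of_disjoint hB]

lemma sdiff_inter_eq_inter_of_disjoint {N M : Finset α} (h : Disjoint N M) (W : Finset α) :
    (W \ N) ∩ M = W ∩ M := by
  ext x
  have : x ∈ N → x ∉ M := fun hx => Finset.disjoint_left.mp h hx
  simp only [mem_inter, mem_sdiff]
  tauto

lemma card_filter_powerset_inter_and {U N : Finset α} (hNU : N ⊆ U)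
    (R Q : Finset α → Prop) [DecidablePred R] [DecidablePred Q]
    (hQ : ∀ W, Q (W \ N) ↔ Q W) :
    #{W ∈ U.powerset | R (W ∩ N) ∧ Q W}
      = #{A ∈ N.powerset | R A} * #{B ∈ (U \ N).powerset | Q B} := by
  rw [← card_product]
  refine card_nbij' (fun W => (W ∩ N, W \ N)) (fun p => p.1 ∪ p.2) ?_ ?_ ?_ ?_
  · intro W hW
    simp only [mem_coe, mem_filter, mem_powerset, mem_product] at hW ⊢
    exact ⟨⟨inter_subset_right, hW.2.1⟩, sdiff_subset_sdiff hW.1 subset_rfl, (hQ W).2 hW.2.2⟩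
  · rintro ⟨A, B⟩ hAB
    simp only [mem_coe, mem_filter, mem_powerset, mem_product] at hAB ⊢
    obtain ⟨⟨hAN, hRA⟩, hBU, hQB⟩ := hAB
    have hBN : Disjoint B N := disjoint_of_subset_left hBU sdiff_disjoint
    refine ⟨union_subset (hAN.trans hNU) (hBU.trans sdiff_subset), ?_, ?_⟩
    · rwa [union_inter_eq_left_of_subset_of_disjoint hAN hBN]
    · rwa [← hQ, union_sdiff_eq_right_of_subset_of_disjoint hAN hBN]
  · intro W _
    exact sup_inf_sdiff W N
  · rintro ⟨A, B⟩ hAB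
    simp only [mem_coe, mem_filter, mem_powerset, mem_product] at hAB
    have hBN : Disjoint B N := disjoint_of_subset_left hAB.2.1 sdiff_disjoint
    simp only [union_inter_eq_left_of_subset_of_disjoint hAB.1.1 hBN,
      union_sdiff_eq_right_of_subset_of_disjoint hAB.1.1 hBN]

lemma two_pow_card_mul_card_filter_inter_ne_empty_and {U N : Finset α} (hNU : N ⊆ U)
    (Q : Finset α → Prop) [DecidablePred Q] (hQ : ∀ W, Q (W \ N) ↔ Q W) :
    2 ^ #N * #{W ∈ U.powerset | W ∩ N ≠ ∅ ∧ Q W}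
      = (2 ^ #N - 1) * #{W ∈ U.powerset | Q W} := by
  have hall := card_filter_powerset_inter_and hNU (fun _ => True) Q hQ
  simp only [true_and, filter_true, card_powerset] at hall
  have hne : #{A ∈ N.powerset | A ≠ ∅} = 2 ^ #N - 1 := by
    rw [filter_ne', card_erase_of_mem (empty_mem_powerset N), card_powerset]
  rw [card_filter_powerset_inter_and hNU (· ≠ ∅) Q hQ, hall, hne]
  ring

def hittingSets (U : Finset α) (N : ι → Finset α) (I : Finset ι) : Finset (Finset α) :=
  {W ∈ U.powerset | ∀ i ∈ I, W ∩ N i ≠ ∅}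

theorem two_pow_sum_card_mul_card_hittingSets [DecidableEq ι] {U : Finset α} {N : ι → Finset α}
    {I : Finset ι} (hNU : ∀ i ∈ I, N i ⊆ U) (hN : (I : Set ι).PairwiseDisjoint N) :
    2 ^ (∑ i ∈ I, #(N i)) * #(hittingSets U N I) = 2 ^ #U * ∏ i ∈ I, (2 ^ #(N i) - 1) := by
  induction I using Finset.induction_on with
  | empty => simp [hittingSets]
  | @insert i I hi ih =>
    rw [coe_insert, Set.pairwiseDisjoint_insert_of_notMem (mem_coe.not.mpr hi)] at hN
    have hQ : ∀ W, (∀ j ∈ I, (W \ N i) ∩ N j ≠ ∅) ↔ ∀ j ∈ I, W ∩ N j ≠ ∅ := fun W =>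
      forall₂_congr fun j hj => by rw [sdiff_inter_eq_inter_of_disjoint (hN.2 j hj)]
    have hstep := two_pow_card_mul_card_filter_inter_ne_empty_and (hNU i (mem_insert_self i I))
      (fun W => ∀ j ∈ I, W ∩ N j ≠ ∅) hQ
    have hins : hittingSets U N (insert i I)
        = {W ∈ U.powerset | W ∩ N i ≠ ∅ ∧ ∀ j ∈ I, W ∩ N j ≠ ∅} := by
      simp only [hittingSets, forall_mem_insert]
    calc 2 ^ (∑ j ∈ insert i I, #(N j)) * #(hittingSets U N (insert i I))
        = 2 ^ (∑ j ∈ I, #(N j)) * (2 ^ #(N i) * #(hittingSets U N (insert i I))) := by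
          rw [sum_insert hi, pow_add]; ring
      _ = (2 ^ #(N i) - 1) * (2 ^ (∑ j ∈ I, #(N j)) * #(hittingSets U N I)) := by
          rw [hins, hstep, hittingSets]; ring
      _ = 2 ^ #U * ∏ j ∈ insert i I, (2 ^ #(N j) - 1) := by
          rw [ih (fun j hj => hNU j (mem_insert_of_mem hj)) hN.1, prod_insert hi]; ring

end Finset

lemma Bset_eq_hittingSets {V : Type*} [Fintype V] [DecidableEq V] (G : SimpleGraph V)
    [DecidableRel G.Adj] (S S' : Finset V) :
    Bset G S S' = hittingSets (univ \ S) (fun s => G.neighborFinset s) S' := by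
  unfold Bset hittingSets
  -- not `rfl`: `Bset` decides its filter predicate through `Fintype V`, `hittingSets` through `I`
  congr

/-- If `S` is independent and the neighborhoods `N(s)`, `s ∈ S`, are pairwise
disjoint, then for every `S' ⊆ S`:
`2^{∑_{s∈S'} |N(s)|} · |B(S')| = 2^{|V∖S|} · ∏_{s∈S'} (2^{|N(s)|} − 1)`. -/
theorem card_Bset_eq
    {V : Type*} [Fintype V] [DecidableEq V] (G : SimpleGraph V) [DecidableRel G.Adj]
    (S : Finset V) (hS : ∀ u ∈ S, ∀ v ∈ S, ¬ G.Adj u v)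
    (hdisj : ∀ s₁ ∈ S, ∀ s₂ ∈ S, s₁ ≠ s₂ →
      G.neighborFinset s₁ ∩ G.neighborFinset s₂ = ∅)
    (S' : Finset V) (hS' : S' ⊆ S) :
    2 ^ (∑ s ∈ S', (G.neighborFinset s).card) * (Bset G S S').card
      = 2 ^ (Finset.univ \ S).card * ∏ s ∈ S', (2 ^ (G.neighborFinset s).card - 1) := by
  have hNU : ∀ s ∈ S', G.neighborFinset s ⊆ univ \ S := fun s hs v hv =>
    mem_sdiff.mpr ⟨mem_univ v, fun hvS => hS s (hS' hs) v hvS ((G.mem_neighborFinset s v).mp hv)⟩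
  have hN : (S' : Set V).PairwiseDisjoint fun s => G.neighborFinset s := fun s hs t ht hst =>
    disjoint_iff_inter_eq_empty.mpr (hdisj s (hS' hs) t (hS' ht) hst)
  rw [Bset_eq_hittingSets]
  exact two_pow_sum_card_mul_card_hittingSets hNU hN
end

section
/- Let G be a simple graph on a finite vertex set V with |V| = n, let Δ ≥ 1 be an integer and α ∈ [0,1] a real number. Assume there exists a set V' ⊆ V with |V'| ≥ (1−α)·n such that deg(v) ≥ Δ − 1 for every v ∈ V'. Then G has a dominating set R ⊆ V of size |R| ≤ ((1−α)·(1 + ln Δ)/Δ + α)·n. -/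
/-!
Choose a random set `X` containing each vertex of `V'` independently with probability
`p = ln Δ / Δ` and every other vertex surely, and add to it the vertices it leaves undominated.
In expectation `X` has `p·|V'| + (n - |V'|)` vertices, and a vertex of `V'`, whose closed
neighbourhood has at least `Δ` vertices, is undominated with probability at most
`(1 - p)^Δ ≤ e^{-pΔ} = 1/Δ`; so some outcome gives a dominating set of size at most
`|V'|·(1 + ln Δ)/Δ + (n - |V'|)`, which is at most the bound since `(1 + ln Δ)/Δ ≤ 1`.
-/

open Finset

lemma sum_mul_card_filter {α κ : Type*} [Fintype κ] (s : Finset α) (w : α → ℝ)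
    (P : κ → α → Prop) [∀ k x, Decidable (P k x)] :
    ∑ x ∈ s, w x * #{k | P k x} = ∑ k, ∑ x ∈ s with P k x, w x := by
  simp only [card_eq_sum_ones, sum_filter, Nat.cast_sum, mul_sum]
  rw [sum_comm]
  simp

section BernoulliSet

variable {ι : Type*} [Fintype ι] [DecidableEq ι]

/-- The probability that the random subset of `ι` containing each `i` independently with
probability `π i` equals `X`. -/
def bernoulliSetWeight (π : ι → ℝ) (X : Finset ι) : ℝ :=
  (∏ i ∈ X, π i) * ∏ i ∈ Xᶜ, (1 - π i)

lemma bernoulliSetWeight_nonneg {π : ι → ℝ} (hπ₀ : ∀ i, 0 ≤ π i) (hπ₁ : ∀ i, π i ≤ 1)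
    (X : Finset ι) :
    0 ≤ bernoulliSetWeight π X :=
  mul_nonneg (prod_nonneg fun i _ => hπ₀ i) (prod_nonneg fun i _ => sub_nonneg.2 (hπ₁ i))

lemma sum_bernoulliSetWeight_disjoint (π : ι → ℝ) (T : Finset ι) :
    ∑ X with Disjoint X T, bernoulliSetWeight π X = ∏ i ∈ T, (1 - π i) := by
  have h := Fintype.prod_add (fun i => if i ∉ T then π i else 0) (fun i => 1 - π i)
  have hT : ∏ i, ((if i ∉ T then π i else 0) + (1 - π i)) = ∏ i ∈ T, (1 - π i) := by
    rw [← univ_inter T, ← prod_ite_mem]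
    exact prod_congr rfl fun i _ => by split_ifs <;> simp_all
  rw [hT] at h
  rw [h, sum_filter]
  refine sum_congr rfl fun X _ => ?_
  rw [prod_ite_zero, ite_mul, zero_mul]
  simp only [bernoulliSetWeight, disjoint_left]
  congr

lemma sum_bernoulliSetWeight (π : ι → ℝ) : ∑ X, bernoulliSetWeight π X = 1 := by
  simpa using sum_bernoulliSetWeight_disjoint π ∅

lemma sum_bernoulliSetWeight_mem (π : ι → ℝ) (u : ι) :
    ∑ X with u ∈ X, bernoulliSetWeight π X = π u := by
  have h := sum_filter_add_sum_filter_not univ (u ∈ ·) (bernoulliSetWeight π)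
  have h' := sum_bernoulliSetWeight_disjoint π {u}
  simp only [disjoint_singleton_right, prod_singleton] at h'
  rw [h', sum_bernoulliSetWeight] at h
  linarith

lemma sum_bernoulliSetWeight_mul_card (π : ι → ℝ) :
    ∑ X, bernoulliSetWeight π X * #X = ∑ i, π i := by
  simp_rw [← sum_bernoulliSetWeight_mem π, ← sum_mul_card_filter]
  simp

end BernoulliSet

lemma exists_le_sum_mul_of_sum_eq_one {α : Type*} {s : Finset α} (hs : s.Nonempty)
    {w f : α → ℝ} (hw₀ : ∀ x ∈ s, 0 ≤ w x) (hw₁ : ∑ x ∈ s, w x = 1) :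
    ∃ x ∈ s, f x ≤ ∑ y ∈ s, w y * f y := by
  obtain ⟨x, hx, hmin⟩ := exists_min_image s f hs
  refine ⟨x, hx, ?_⟩
  calc f x = ∑ y ∈ s, w y * f x := by rw [← sum_mul, hw₁, one_mul]
    _ ≤ ∑ y ∈ s, w y * f y :=
      sum_le_sum fun y hy => mul_le_mul_of_nonneg_left (hmin y hy) (hw₀ y hy)

namespace SimpleGraph

variable {V : Type*} [Fintype V] [DecidableEq V] (G : SimpleGraph V) [DecidableRel G.Adj]

def closedNeighborFinset (v : V) : Finset V := insert v (G.neighborFinset v)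

lemma card_closedNeighborFinset (v : V) : #(G.closedNeighborFinset v) = G.degree v + 1 := by
  rw [closedNeighborFinset, card_insert_of_notMem (G.notMem_neighborFinset_self v),
    card_neighborFinset_eq_degree]

def undominatedFinset (Y : Finset V) : Finset V := {v | Disjoint Y (G.closedNeighborFinset v)}

lemma exists_adj_of_notMem_union_undominatedFinset {Y : Finset V} {v : V}
    (hv : v ∉ Y ∪ G.undominatedFinset Y) : ∃ u ∈ Y ∪ G.undominatedFinset Y, G.Adj v u := by
  simp only [mem_union, undominatedFinset, mem_filter_univ, not_or, closedNeighborFinset,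
    disjoint_insert_right, not_and] at hv
  obtain ⟨u, huY, huv⟩ := not_disjoint_iff.1 (hv.2 hv.1)
  exact ⟨u, mem_union_left _ huY, (G.mem_neighborFinset v u).1 huv⟩

lemma sum_bernoulliSetWeight_mul_card_undominatedFinset (π : V → ℝ) :
    ∑ X, bernoulliSetWeight π X * #(G.undominatedFinset X)
      = ∑ v, ∏ i ∈ G.closedNeighborFinset v, (1 - π i) := by
  simp_rw [← sum_bernoulliSetWeight_disjoint, ← sum_mul_card_filter]
  rfl

theorem exists_dominating_card_le (S : Finset V) (δ : ℕ) (hS : ∀ v ∈ S, δ ≤ G.degree v + 1)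
    {p : ℝ} (hp₀ : 0 ≤ p) (hp₁ : p ≤ 1) :
    ∃ R : Finset V, (∀ v, v ∉ R → ∃ u ∈ R, G.Adj v u) ∧
      (#R : ℝ) ≤ p * #S + (Fintype.card V - #S) + #S * (1 - p) ^ δ := by
  -- Vertices outside `S` are always chosen, so only vertices of `S` can be left undominated.
  set π : V → ℝ := fun i => if i ∈ S then p else 1
  have hπ₀ : ∀ i, 0 ≤ π i := fun i => by by_cases hi : i ∈ S <;> simp [π, hi, hp₀]
  have hπ₁ : ∀ i, π i ≤ 1 := fun i => by by_cases hi : i ∈ S <;> simp [π, hi, hp₁]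
  have hsum_π : ∑ i, π i = p * #S + (Fintype.card V - #S) := by
    simp [π, sum_ite, filter_not, ← compl_eq_univ_sdiff, card_compl,
      Nat.cast_sub (card_le_univ S), mul_comm]
  have hundom : ∑ v, ∏ i ∈ G.closedNeighborFinset v, (1 - π i) ≤ #S * (1 - p) ^ δ := by
    calc ∑ v, ∏ i ∈ G.closedNeighborFinset v, (1 - π i)
        ≤ ∑ v, if v ∈ S then (1 - p) ^ δ else 0 := sum_le_sum fun v _ => ?_
      _ = #S * (1 - p) ^ δ := by simp [sum_ite_mem]
    split_ifs with hv
    · calc ∏ i ∈ G.closedNeighborFinset v, (1 - π i)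
          ≤ ∏ i ∈ G.closedNeighborFinset v, (1 - p) :=
            prod_le_prod (fun i _ => sub_nonneg.2 (hπ₁ i))
              fun i _ => by by_cases hi : i ∈ S <;> simp [π, hi, hp₁]
        _ = (1 - p) ^ (G.degree v + 1) := by rw [prod_const, card_closedNeighborFinset]
        _ ≤ (1 - p) ^ δ := pow_le_pow_of_le_one (by linarith) (by linarith) (hS v hv)
    · exact (prod_eq_zero (mem_insert_self v _) (by simp [π, hv])).le
  obtain ⟨X, -, hX⟩ := exists_le_sum_mul_of_sum_eq_one univ_nonempty
    (fun X _ => bernoulliSetWeight_nonneg hπ₀ hπ₁ X) (sum_bernoulliSetWeight π)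
    (f := fun X => (#X + #(G.undominatedFinset X) : ℝ))
  simp only [mul_add, sum_add_distrib, sum_bernoulliSetWeight_mul_card,
    sum_bernoulliSetWeight_mul_card_undominatedFinset] at hX
  refine ⟨X ∪ G.undominatedFinset X,
    fun v hv => G.exists_adj_of_notMem_union_undominatedFinset hv, ?_⟩
  calc (#(X ∪ G.undominatedFinset X) : ℝ) ≤ #X + #(G.undominatedFinset X) := by
        exact_mod_cast card_union_le _ _
    _ ≤ _ := by linarith

end SimpleGraph

theorem exists_small_dominating_set_general
    {V : Type*} [Fintype V] [DecidableEq V] (G : SimpleGraph V) [DecidableRel G.Adj]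
    (Δ : ℕ) (hΔ : 1 ≤ Δ) (α : ℝ)
    (V' : Finset V) (hV'card : (1 - α) * Fintype.card V ≤ V'.card)
    (hdeg : ∀ v ∈ V', Δ - 1 ≤ G.degree v) :
    ∃ R : Finset V,
      (∀ v : V, v ∉ R → ∃ u ∈ R, G.Adj v u) ∧
      (R.card : ℝ) ≤ ((1 - α) * (1 + Real.log Δ) / Δ + α) * Fintype.card V := by
  have hΔpos : (0 : ℝ) < Δ := by exact_mod_cast hΔ
  have hlog : Real.log Δ ≤ Δ - 1 := Real.log_le_sub_one_of_pos hΔpos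
  obtain ⟨R, hdom, hR⟩ := G.exists_dominating_card_le V' Δ
    (fun v hv => Nat.le_add_of_sub_le (hdeg v hv)) (div_nonneg (Real.log_natCast_nonneg Δ) hΔpos.le)
    (div_le_one_of_le₀ (by linarith) hΔpos.le)
  have hpow : (1 - Real.log Δ / Δ) ^ Δ ≤ (Δ : ℝ)⁻¹ := by
    calc (1 - Real.log Δ / Δ) ^ Δ ≤ Real.exp (-Real.log Δ) :=
          Real.one_sub_div_pow_le_exp_neg (by linarith)
      _ = (Δ : ℝ)⁻¹ := by rw [Real.exp_neg, Real.exp_log hΔpos]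
  have hc : (1 + Real.log Δ) / Δ ≤ 1 := by rw [div_le_one hΔpos]; linarith
  refine ⟨R, hdom, hR.trans ?_⟩
  set m : ℝ := (#V' : ℝ)
  set n : ℝ := (Fintype.card V : ℝ)
  calc Real.log Δ / Δ * m + (n - m) + m * (1 - Real.log Δ / Δ) ^ Δ
      ≤ (1 + Real.log Δ) / Δ * m + (n - m) := by
        have := mul_le_mul_of_nonneg_left hpow (Nat.cast_nonneg' #V' : (0 : ℝ) ≤ m)
        rw [add_div, div_eq_mul_inv 1, one_mul]
        linarith
    _ ≤ ((1 - α) * (1 + Real.log Δ) / Δ + α) * n := by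
        rw [mul_div_assoc]
        nlinarith [mul_nonneg (sub_nonneg.2 hc) (sub_nonneg.2 hV'card)]

/-- If at least `(1−α)·n` of the `n` vertices of `G` have degree at least
`Δ − 1`, then `G` has a dominating set `R` of size at most
`((1−α)·(1 + ln Δ)/Δ + α)·n`. -/
theorem exists_small_dominating_set
    {V : Type*} [Fintype V] [DecidableEq V] (G : SimpleGraph V) [DecidableRel G.Adj]
    (Δ : ℕ) (hΔ : 1 ≤ Δ) (α : ℝ) (hα0 : 0 ≤ α) (hα1 : α ≤ 1)
    (V' : Finset V) (hV'card : (1 - α) * Fintype.card V ≤ V'.card)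
    (hdeg : ∀ v ∈ V', Δ - 1 ≤ G.degree v) :
    ∃ R : Finset V,
      (∀ v : V, v ∉ R → ∃ u ∈ R, G.Adj v u) ∧
      (R.card : ℝ) ≤ ((1 - α) * (1 + Real.log Δ) / Δ + α) * Fintype.card V :=
  exists_small_dominating_set_general G Δ hΔ α V' hV'card hdeg
end

section
/- Let r, k, Δ' be integers with r ≥ 2, k ≥ 1 and Δ' ≥ 0, and set Δ = r² + r·(k−1)·Δ'. Let B be a finite set with |B| > Δ and let A ⊆ B satisfy |B ∖ A| ≤ (k−1)·Δ'. Then the number of r-element subsets of B is at most 4 times the number of r-element subsets of A, i.e., C(|B|, r) ≤ 4·C(|A|, r). -/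
/-!
Write `|A| = a` and `|B| = a + d` with `d = |B ∖ A|`. Then `C(a + d, r) / C(a, r)` is the product
of the factors `(a + d - i) / (a - i)` for `i < r`, and since `a ≥ (r - 1)(d + 1)` each factor is
at most `r / (r - 1)`. It remains that `(1 - 1/r)^r ≥ 1/4`, which is Bernoulli's inequality
`(1 - 1/r)^(r/2) ≥ 1/2` (real exponent `r/2 ≥ 1`) squared.
-/

open Nat Finset

theorem one_quarter_le_one_sub_inv_pow {r : ℝ} (hr : 2 ≤ r) : 1 / 4 ≤ (1 - r⁻¹) ^ r := by
  have hbase : 0 ≤ 1 - r⁻¹ := by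
    rw [sub_nonneg]; exact inv_le_one_of_one_le₀ (by linarith)
  have half : 1 / 2 ≤ (1 - r⁻¹) ^ (r / 2) := by
    have := one_add_mul_self_le_rpow_one_add (s := -r⁻¹) (p := r / 2)
      (by rw [neg_le_neg_iff]; exact inv_le_one_of_one_le₀ (by linarith)) (by linarith)
    convert this using 1
    · field_simp; ring
    · ring_nf
  calc (1 : ℝ) / 4 = (1 / 2) ^ 2 := by norm_num
    _ ≤ ((1 - r⁻¹) ^ (r / 2)) ^ 2 := by gcongr
    _ = (1 - r⁻¹) ^ r := by
      rw [← Real.rpow_natCast, ← Real.rpow_mul hbase]; norm_num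

theorem pow_self_le_four_mul_pred_pow {r : ℕ} (hr : 2 ≤ r) : r ^ r ≤ 4 * (r - 1) ^ r := by
  have hr' : (2 : ℝ) ≤ r := by exact_mod_cast hr
  have key := one_quarter_le_one_sub_inv_pow hr'
  have hbase : 1 - (r : ℝ)⁻¹ = (r - 1) / r := by field_simp
  rw [Real.rpow_natCast, hbase, div_pow, le_div_iff₀ (by positivity)] at key
  have hcast : ((r - 1 : ℕ) : ℝ) = r - 1 := by push_cast [Nat.cast_sub (by omega : 1 ≤ r)]; ring
  have : (r : ℝ) ^ r ≤ 4 * ((r - 1 : ℕ) : ℝ) ^ r := by rw [hcast]; linarith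
  exact_mod_cast this

theorem pred_mul_sub_le_mul_sub {a d r i : ℕ} (hi : i < r) (ha : (r - 1) * (d + 1) ≤ a) :
    (r - 1) * (a + d - i) ≤ r * (a - i) := by
  obtain ⟨m, rfl⟩ : ∃ m, r = m + 1 := ⟨r - 1, by omega⟩
  simp only [add_tsub_cancel_right] at ha ⊢
  rw [mul_add, mul_one] at ha
  have : m * d ≤ a - i := by omega
  calc m * (a + d - i) = m * (a - i) + m * d := by rw [← mul_add]; congr 1; omega
    _ ≤ m * (a - i) + (a - i) := by omega
    _ = (m + 1) * (a - i) := by ring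

theorem pred_pow_mul_descFactorial_add_le {a d r : ℕ} (ha : (r - 1) * (d + 1) ≤ a) :
    (r - 1) ^ r * (a + d).descFactorial r ≤ r ^ r * a.descFactorial r := by
  rw [descFactorial_eq_prod_range, descFactorial_eq_prod_range]
  calc (r - 1) ^ r * ∏ i ∈ range r, (a + d - i) = ∏ i ∈ range r, (r - 1) * (a + d - i) := by
        rw [prod_mul_distrib, prod_const, card_range]
    _ ≤ ∏ i ∈ range r, r * (a - i) :=
        prod_le_prod' fun i hi => pred_mul_sub_le_mul_sub (mem_range.mp hi) ha
    _ = r ^ r * ∏ i ∈ range r, (a - i) := by rw [prod_mul_distrib, prod_const, card_range]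

theorem choose_add_le_four_mul_choose {a d r : ℕ} (hr : 2 ≤ r) (ha : (r - 1) * (d + 1) ≤ a) :
    (a + d).choose r ≤ 4 * a.choose r := by
  have hpos : 0 < (r - 1) ^ r * r ! := Nat.mul_pos (Nat.pow_pos (by omega)) (factorial_pos r)
  refine le_of_mul_le_mul_left ?_ hpos
  calc (r - 1) ^ r * r ! * (a + d).choose r = (r - 1) ^ r * (a + d).descFactorial r := by
        rw [descFactorial_eq_factorial_mul_choose, mul_assoc]
    _ ≤ r ^ r * a.descFactorial r := pred_pow_mul_descFactorial_add_le ha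
    _ ≤ 4 * (r - 1) ^ r * a.descFactorial r := by gcongr; exact pow_self_le_four_mul_pred_pow hr
    _ = (r - 1) ^ r * r ! * (4 * a.choose r) := by
        rw [descFactorial_eq_factorial_mul_choose]; ring

theorem choose_le_four_mul_choose_general
    {γ : Type*} [DecidableEq γ] (r k Δ' : ℕ) (hr : 2 ≤ r)
    (B A : Finset γ) (hAB : A ⊆ B)
    (hB : r ^ 2 + r * (k - 1) * Δ' < B.card)
    (hBA : (B \ A).card ≤ (k - 1) * Δ') :
    Nat.choose B.card r ≤ 4 * Nat.choose A.card r := by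
  set d := (B \ A).card
  have hcard : A.card + d = B.card := by rw [add_comm]; exact card_sdiff_add_card_eq_card hAB
  have hrd : r * d ≤ r * (k - 1) * Δ' := by rw [mul_assoc]; exact Nat.mul_le_mul_left r hBA
  have hA : (r - 1) * (d + 1) ≤ A.card := by
    obtain ⟨m, rfl⟩ : ∃ m, r = m + 1 := ⟨r - 1, by omega⟩
    simp only [add_tsub_cancel_right]
    nlinarith
  rw [← hcard]
  exact choose_add_le_four_mul_choose hr hA

/-- Counting core of the contraction lemma: let `r ≥ 2`, `k ≥ 1`, `Δ' ≥ 0` and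
`Δ = r² + r·(k−1)·Δ'`.  If `B` is a finite set with `|B| > Δ` and `A ⊆ B`
satisfies `|B ∖ A| ≤ (k−1)·Δ'`, then `C(|B|, r) ≤ 4·C(|A|, r)`. -/
theorem choose_le_four_mul_choose
    {γ : Type*} [DecidableEq γ] (r k Δ' : ℕ) (hr : 2 ≤ r) (hk : 1 ≤ k)
    (B A : Finset γ) (hAB : A ⊆ B)
    (hB : r ^ 2 + r * (k - 1) * Δ' < B.card)
    (hBA : (B \ A).card ≤ (k - 1) * Δ') :
    Nat.choose B.card r ≤ 4 * Nat.choose A.card r :=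
  choose_le_four_mul_choose_general r k Δ' hr B A hAB hB hBA
end
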